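/- arXiv:1810.08799 — 7 statements merged into one kernel-verified Lean document; each statement's English description precedes it below -/
import Mathlib

section
/- For every committee size k and every positive integer ℓ ≤ k, there exist an approval-based election (N, C, A), a size-k committee W winning under Phragmén's Maximal Rule, and an ℓ-large group of voters V ⊆ N with |∩_{i∈V} A(i)| ≥ ℓ such that sat_V(A,W) = 1. Consequently the proportionality degree of Phragmén's Maximal Rule satisfies d_maxPhrag(ℓ) ≤ 1. -/
open Finset

noncomputable def satisf {C : Type*} [DecidableEq C] {n : ℕ}
    (A : Fin n → Finset C) (V : Finset (Fin n)) (W : Finset C) : ℝ :=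
  (∑ i ∈ V, ((W ∩ A i).card : ℝ)) / (V.card : ℝ)

def commonApproved {C : Type*} [Fintype C] [DecidableEq C] {n : ℕ}
    (A : Fin n → Finset C) (V : Finset (Fin n)) : Finset C :=
  Finset.univ.filter (fun c => ∀ i ∈ V, c ∈ A i)

def LargeGroup {n : ℕ} (k ℓ : ℕ) (V : Finset (Fin n)) : Prop :=
  (ℓ : ℝ) * (n : ℝ) / (k : ℝ) ≤ (V.card : ℝ)

def FeasibleLoads {C : Type*} {n : ℕ} (A : Fin n → Finset C) (W : Finset C)
    (ξ : C → Fin n → ℝ) : Prop :=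
  ∀ c ∈ W, (∀ i, 0 ≤ ξ c i) ∧ (∑ i, ξ c i = 1) ∧ (∀ i, c ∉ A i → ξ c i = 0)

noncomputable def maxLoad {C : Type*} {n : ℕ} (W : Finset C) (ξ : C → Fin n → ℝ) : ℝ :=
  ⨆ i, ∑ c ∈ W, ξ c i

/-- Phragmén's Maximal Rule: a size-`k` committee is winning if its unit loads can be
distributed among approving voters so that the maximal voter load is minimal over all size-`k`
committees and all feasible load distributions. -/
def MaxPhragmenWins {C : Type*} {n : ℕ} (A : Fin n → Finset C) (k : ℕ) (W : Finset C) : Prop :=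
  W.card = k ∧ ∃ ξ : C → Fin n → ℝ, FeasibleLoads A W ξ ∧
    ∀ (W' : Finset C) (ξ' : C → Fin n → ℝ), W'.card = k → FeasibleLoads A W' ξ' →
      maxLoad W ξ ≤ maxLoad W' ξ'

theorem max_phragmen_proportionality_degree_upper
    (k ℓ : ℕ) (hℓ : 0 < ℓ) (hℓk : ℓ ≤ k) :
    ∃ (n m : ℕ) (A : Fin n → Finset (Fin m)) (W : Finset (Fin m)) (V : Finset (Fin n)),
      0 < n ∧ MaxPhragmenWins A k W ∧ LargeGroup k ℓ V ∧
      (ℓ : ℝ) ≤ ((commonApproved A V).card : ℝ) ∧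
      satisf A V W = 1 := by
  have hk : 0 < k := lt_of_lt_of_le hℓ hℓk
  set A : Fin k → Finset (Fin (k+ℓ)) :=
    fun i => Finset.univ.filter (fun c => c.val = i.val ∨ (i.val < ℓ ∧ k ≤ c.val)) with hA
  set W : Finset (Fin (k+ℓ)) :=
    (Finset.range k).attachFin (fun m hm => by simp at hm; omega) with hW
  set V : Finset (Fin k) :=
    (Finset.range ℓ).attachFin (fun m hm => by simp at hm; omega) with hV
  have hWmem : ∀ c : Fin (k+ℓ), c ∈ W ↔ c.val < k := by
    intro c; simp [hW, Finset.mem_attachFin]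
  have hWcard : W.card = k := by simp [hW, Finset.card_attachFin]
  have hVmem : ∀ i : Fin k, i ∈ V ↔ i.val < ℓ := by
    intro i; simp [hV, Finset.mem_attachFin]
  have hVcard : V.card = ℓ := by simp [hV, Finset.card_attachFin]
  set ξ : Fin (k+ℓ) → Fin k → ℝ := fun c i => if c.val = i.val then 1 else 0 with hξ
  have hfeas : FeasibleLoads A W ξ := by
    intro c hc
    have hck : c.val < k := (hWmem c).mp hc
    refine ⟨fun i => by positivity, ?_, ?_⟩
    · have h1 : ∀ i : Fin k,
          (if c.val = i.val then (1:ℝ) else 0) = if i = ⟨c.val, hck⟩ then 1 else 0 := by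
        intro i; congr 1; simp [Fin.ext_iff, eq_comm]
      simp only [hξ]
      rw [Finset.sum_congr rfl (fun i _ => h1 i)]
      simp
    · intro i hci
      have hne : ¬ c.val = i.val := fun h => hci (by simp [hA, h])
      simp [hξ, hne]
  have hload : ∀ i : Fin k, ∑ c ∈ W, ξ c i = 1 := by
    intro i
    have hik : i.val < k + ℓ := by omega
    rw [Finset.sum_eq_single (⟨i.val, hik⟩ : Fin (k+ℓ))]
    · simp [hξ]
    · intro c hc hne
      have h2 : ¬ c.val = i.val := fun h => hne (Fin.ext h)
      simp [hξ, h2]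
    · intro h
      exact absurd ((hWmem _).mpr (by simpa using i.isLt)) h
  haveI : Nonempty (Fin k) := ⟨⟨0, hk⟩⟩
  have hmax : maxLoad W ξ = 1 := by
    unfold maxLoad
    simp only [hload]
    exact ciSup_const
  refine ⟨k, k + ℓ, A, W, V, hk, ⟨hWcard, ξ, hfeas, ?_⟩, ?_, ?_, ?_⟩
  · -- minimality
    intro W' ξ' hW'card hfeas'
    rw [hmax]
    -- each candidate load in [0,1], total = k over k voters
    have htot : ∑ i : Fin k, ∑ c ∈ W', ξ' c i = k := by
      rw [Finset.sum_comm]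
      have : ∀ c ∈ W', ∑ i : Fin k, ξ' c i = 1 := fun c hc => (hfeas' c hc).2.1
      rw [Finset.sum_congr rfl this]
      simp [hW'card]
    have hne : (Finset.univ : Finset (Fin k)).Nonempty := by
      simpa [Finset.univ_nonempty_iff] using Fin.pos_iff_nonempty.mp hk
    obtain ⟨i, _, hi⟩ := Finset.exists_le_of_sum_le (f := fun _ : Fin k => (1:ℝ))
      (g := fun i => ∑ c ∈ W', ξ' c i) hne (by simp [htot])
    -- bounded above
    have hbdd : BddAbove (Set.range fun i : Fin k => ∑ c ∈ W', ξ' c i) := by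
      refine ⟨(k : ℝ), ?_⟩
      rintro x ⟨j, rfl⟩
      calc ∑ c ∈ W', ξ' c j ≤ ∑ c ∈ W', 1 := by
            refine Finset.sum_le_sum fun c hc => ?_
            obtain ⟨hpos, hsum, -⟩ := hfeas' c hc
            calc ξ' c j ≤ ∑ i : Fin k, ξ' c i :=
                  Finset.single_le_sum (fun i _ => hpos i) (Finset.mem_univ j)
              _ = 1 := hsum
        _ = (W'.card : ℝ) := by simp
        _ = (k : ℝ) := by rw [hW'card]
    exact le_trans hi (le_ciSup hbdd i)
  · -- LargeGroup
    unfold LargeGroup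
    rw [hVcard]
    rw [mul_div_assoc, div_self (by exact_mod_cast hk.ne')]
    simp
  · -- commonApproved
    have hsub : (Finset.Ico k (k+ℓ)).attachFin (fun m hm => (Finset.mem_Ico.mp hm).2)
        ⊆ commonApproved A V := by
      intro c hc
      rw [Finset.mem_attachFin, Finset.mem_Ico] at hc
      unfold commonApproved
      rw [Finset.mem_filter]
      refine ⟨Finset.mem_univ _, fun i hi => ?_⟩
      have : i.val < ℓ := (hVmem i).mp hi
      simp [hA]
      omega
    have hcard := Finset.card_le_card hsub
    rw [Finset.card_attachFin, Nat.card_Ico] at hcard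
    exact_mod_cast by omega
  · -- satisfaction
    unfold satisf
    have hone : ∀ i ∈ V, ((W ∩ A i).card : ℝ) = 1 := by
      intro i hi
      have hiℓ : i.val < ℓ := (hVmem i).mp hi
      have hik : i.val < k + ℓ := by omega
      have : W ∩ A i = {(⟨i.val, hik⟩ : Fin (k+ℓ))} := by
        ext c
        rw [Finset.mem_inter, hWmem, Finset.mem_singleton]
        simp [hA, Fin.ext_iff]
        omega
      rw [this]
      simp
    rw [Finset.sum_congr rfl hone, Finset.sum_const, hVcard, nsmul_eq_mul, mul_one,
      div_self (show (ℓ:ℝ) ≠ 0 by exact_mod_cast hℓ.ne')]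
end

section
/- For every committee size k, every positive integer ℓ, and every ε > 0, there exist an approval-based election (N', C', A'), a committee size k', a size-k' committee W winning under Sequential PAV (for some tie-breaking), and an ℓ-large group of voters V ⊆ N' with |∩_{i∈V} A'(i)| ≥ ℓ such that sat_V(A',W) < ℓ/(k·Δ_seqPAV(k)) + ε. Consequently the proportionality degree of Sequential PAV satisfies d_seqPAV(ℓ) ≤ ℓ/(k·Δ_seqPAV(k)) for each k. -/
open Finset

noncomputable def pavScore {C : Type*} [DecidableEq C] {n : ℕ}
    (A : Fin n → Finset C) (W : Finset C) : ℝ :=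
  ∑ i, ∑ j ∈ Finset.range ((A i ∩ W).card), (1 : ℝ) / (j + 1)

/-- A run of Sequential PAV: an injective sequence of candidates such that at each step the
added candidate increases the PAV score of the committee built so far at least as much as any
not-yet-selected candidate would. -/
def IsSeqPAVRun {C : Type*} [Fintype C] [DecidableEq C] {n : ℕ}
    (A : Fin n → Finset C) (k : ℕ) (cand : Fin k → C) : Prop :=
  Function.Injective cand ∧
  ∀ j : Fin k, ∀ c' : C, (∀ j' : Fin k, j' < j → cand j' ≠ c') →
    pavScore A (insert c' (Finset.image cand (Finset.univ.filter (fun j' => j' < j)))) ≤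
      pavScore A (insert (cand j) (Finset.image cand (Finset.univ.filter (fun j' => j' < j))))

def SeqPAVWins {C : Type*} [Fintype C] [DecidableEq C] {n : ℕ}
    (A : Fin n → Finset C) (k : ℕ) (W : Finset C) : Prop :=
  ∃ cand : Fin k → C, IsSeqPAVRun A k cand ∧ W = Finset.image cand Finset.univ

/-- `Δ(A,k,W)` for a run of Sequential PAV: the average (per voter) marginal increase of the
PAV score due to adding the last selected candidate. -/
noncomputable def runLastDelta {C : Type*} [DecidableEq C] {n k : ℕ}
    (A : Fin n → Finset C) (cand : Fin k → C) (hk : 0 < k) : ℝ :=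
  (pavScore A (Finset.image cand Finset.univ) -
    pavScore A ((Finset.image cand Finset.univ).erase (cand ⟨k - 1, Nat.sub_lt hk Nat.one_pos⟩))) /
    (n : ℝ)

/-- `Δ_seqPAV(k)`: the supremum, over all approval profiles, of the maximal average marginal
increase of the PAV score in the last step of a run of Sequential PAV. -/
noncomputable def deltaSeqPAV (k : ℕ) : ℝ :=
  sSup {x : ℝ | ∃ (n m : ℕ) (A : Fin n → Finset (Fin m)) (cand : Fin k → Fin m) (hk : 0 < k),
    0 < n ∧ IsSeqPAVRun A k cand ∧ x = runLastDelta A cand hk}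

open Finset

noncomputable def harm (t : ℕ) : ℝ := ∑ j ∈ Finset.range t, (1:ℝ)/(j+1)

lemma harm_zero : harm 0 = 0 := by simp [harm]

lemma harm_succ (t : ℕ) : harm (t+1) = harm t + 1/(t+1) := by
  simp [harm, Finset.sum_range_succ]

lemma harm_nonneg (t : ℕ) : 0 ≤ harm t := by
  apply Finset.sum_nonneg; intro j _; positivity

lemma harm_mono : Monotone harm := by
  apply monotone_nat_of_le_succ
  intro t; rw [harm_succ]
  have : (0:ℝ) ≤ 1/(t+1) := by positivity
  linarith

lemma harm_one : harm 1 = 1 := by simp [harm]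

lemma harm_le_one (t : ℕ) (h : t ≤ 1) : harm t ≤ 1 := by
  calc harm t ≤ harm 1 := harm_mono h
  _ = 1 := harm_one

lemma harm_succ_sub (t : ℕ) : harm (t+1) - harm t = 1/(t+1) := by rw [harm_succ]; ring

lemma harm_sub_le_one {a b : ℕ} (h : a ≤ b + 1) : harm a - harm b ≤ 1 := by
  have h1 : harm a ≤ harm (b+1) := harm_mono h
  have h2 : harm (b+1) = harm b + 1/(b+1) := harm_succ b
  have h3 : (1:ℝ)/(b+1) ≤ 1 := by
    rw [div_le_one (by positivity)]
    have : (0:ℝ) ≤ (b:ℝ) := by positivity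
    linarith
  linarith

noncomputable def mys {ι γ : Type*} [Fintype ι] [DecidableEq γ]
    (B : ι → Finset γ) (W : Finset γ) : ℝ := ∑ i, harm ((B i ∩ W).card)

section Mys
variable {ι γ : Type*} [Fintype ι] [DecidableEq γ] (B : ι → Finset γ)

lemma pavScore_eq_mys {C : Type*} [DecidableEq C] {n : ℕ} (A : Fin n → Finset C)
    (W : Finset C) : (∑ i, ∑ j ∈ Finset.range ((A i ∩ W).card), (1 : ℝ) / (j + 1)) = mys A W := rfl

lemma mys_mono {W W' : Finset γ} (h : W ⊆ W') : mys B W ≤ mys B W' := by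
  apply Finset.sum_le_sum; intro i _
  exact harm_mono (Finset.card_le_card (Finset.inter_subset_inter le_rfl h))

lemma card_inter_insert_of_mem {s W : Finset γ} {c : γ} (hc : c ∉ W) (hB : c ∈ s) :
    (s ∩ insert c W).card = (s ∩ W).card + 1 := by
  rw [Finset.inter_insert_of_mem hB, Finset.card_insert_of_notMem (by simp [hc])]

lemma card_inter_insert_of_notMem {s W : Finset γ} {c : γ} (hB : c ∉ s) :
    (s ∩ insert c W).card = (s ∩ W).card := by
  rw [Finset.inter_insert_of_notMem hB]

lemma mys_insert {W : Finset γ} {c : γ} (hc : c ∉ W) :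
    mys B (insert c W) = mys B W + ∑ i, (if c ∈ B i then (1:ℝ)/((B i ∩ W).card + 1) else 0) := by
  unfold mys
  rw [← Finset.sum_add_distrib]
  apply Finset.sum_congr rfl
  intro i _
  by_cases hB : c ∈ B i
  · rw [card_inter_insert_of_mem hc hB, harm_succ, if_pos hB]
  · rw [card_inter_insert_of_notMem hB, if_neg hB]; ring

lemma mys_submod {W W' : Finset γ} (h : W ⊆ W') (c : γ) :
    mys B (insert c W') - mys B W' ≤ mys B (insert c W) - mys B W := by
  by_cases hc' : c ∈ W'
  · rw [Finset.insert_eq_self.2 hc']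
    have := mys_mono B (Finset.subset_insert c W)
    linarith
  · have hc : c ∉ W := fun hw => hc' (h hw)
    rw [mys_insert B hc', mys_insert B hc]
    have : ∀ i ∈ Finset.univ (α := ι),
        (if c ∈ B i then (1:ℝ)/((B i ∩ W').card + 1) else 0) ≤
        (if c ∈ B i then (1:ℝ)/((B i ∩ W).card + 1) else 0) := by
      intro i _
      by_cases hB : c ∈ B i
      · simp only [if_pos hB]
        apply div_le_div_of_nonneg_left (by norm_num) (by positivity)
        have : ((B i ∩ W).card : ℝ) ≤ ((B i ∩ W').card : ℝ) := by
          exact_mod_cast Finset.card_le_card (Finset.inter_subset_inter le_rfl h)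
        linarith
      · simp [hB]
    have := Finset.sum_le_sum this
    linarith

lemma mys_insert_notmem_all {W : Finset γ} {c : γ} (h : ∀ i, c ∉ B i) :
    mys B (insert c W) = mys B W := by
  unfold mys
  apply Finset.sum_congr rfl
  intro i _
  by_cases hc : c ∈ W
  · rw [Finset.insert_eq_self.2 hc]
  · rw [card_inter_insert_of_notMem (h i)]

lemma mys_empty : mys B ∅ = 0 := by simp [mys, harm_zero]

lemma mys_singleton_le (c : γ) : mys B {c} ≤ Fintype.card ι := by
  calc mys B {c} ≤ ∑ _i : ι, (1:ℝ) := by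
        apply Finset.sum_le_sum; intro i _
        apply harm_le_one
        calc (B i ∩ {c}).card ≤ ({c} : Finset γ).card :=
              Finset.card_le_card Finset.inter_subset_right
        _ = 1 := Finset.card_singleton c
  _ = Fintype.card ι := by simp

lemma mys_nonneg (W : Finset γ) : 0 ≤ mys B W := by
  apply Finset.sum_nonneg; intro i _; exact harm_nonneg _

end Mys
section BaseRun

variable {ι : Type*} [Fintype ι] {m k : ℕ}

/-- first `r` selected candidates of a run -/
def pre (cand : Fin k → Fin m) (r : ℕ) : Finset (Fin m) :=
  (Finset.univ.filter (fun j : Fin k => (j:ℕ) < r)).image cand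

lemma mem_pre {cand : Fin k → Fin m} {r : ℕ} {c : Fin m} :
    c ∈ pre cand r ↔ ∃ j : Fin k, (j:ℕ) < r ∧ cand j = c := by
  simp [pre]

lemma pre_mono (cand : Fin k → Fin m) {r r' : ℕ} (h : r ≤ r') :
    pre cand r ⊆ pre cand r' := by
  apply Finset.image_subset_image
  intro j hj
  simp only [Finset.mem_filter] at *
  exact ⟨hj.1, lt_of_lt_of_le hj.2 h⟩

lemma pre_succ (cand : Fin k → Fin m) {r : ℕ} (hr : r < k) :
    pre cand (r+1) = insert (cand ⟨r, hr⟩) (pre cand r) := by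
  unfold pre
  rw [← Finset.image_insert]
  congr 1
  ext j
  simp only [Finset.mem_filter, Finset.mem_insert, Finset.mem_univ, true_and]
  constructor
  · intro hj
    rcases Nat.lt_succ_iff_lt_or_eq.1 hj with h | h
    · exact Or.inr h
    · exact Or.inl (Fin.ext h)
  · rintro (h | h)
    · rw [h]; exact Nat.lt_succ_self r
    · exact Nat.lt_succ_of_lt h

lemma pre_k (cand : Fin k → Fin m) {r : ℕ} (h : k ≤ r) :
    pre cand r = Finset.image cand Finset.univ := by
  unfold pre
  congr 1
  apply Finset.filter_true_of_mem
  intro j _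
  exact lt_of_lt_of_le j.2 h

lemma cand_notMem_pre {cand : Fin k → Fin m} (hinj : Function.Injective cand)
    {r : ℕ} (hr : r < k) : cand ⟨r, hr⟩ ∉ pre cand r := by
  rw [mem_pre]
  rintro ⟨j, hj, hc⟩
  have := hinj hc
  rw [this] at hj
  simp at hj

/-- the abstract greedy-run property -/
def GoodRun (A : ι → Finset (Fin m)) (cand : Fin k → Fin m) : Prop :=
  Function.Injective cand ∧
  ∀ r : ℕ, r < k → ∀ c : Fin m,
    mys A (insert c (pre cand r)) ≤ mys A (pre cand (r+1))

/-- marginal gain of the `r`-th step (0-indexed) -/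
noncomputable def gg (A : ι → Finset (Fin m)) (cand : Fin k → Fin m) (r : ℕ) : ℝ :=
  mys A (pre cand (r+1)) - mys A (pre cand r)

lemma gg_nonneg (A : ι → Finset (Fin m)) (cand : Fin k → Fin m) (r : ℕ) :
    0 ≤ gg A cand r := by
  have := mys_mono A (pre_mono cand (Nat.le_succ r))
  unfold gg; linarith

lemma gg_succ_le {A : ι → Finset (Fin m)} {cand : Fin k → Fin m} (h : GoodRun A cand)
    {r : ℕ} (hr : r + 1 < k) : gg A cand (r+1) ≤ gg A cand r := by
  have h1 : mys A (pre cand (r+2)) - mys A (pre cand (r+1)) ≤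
      mys A (insert (cand ⟨r+1, hr⟩) (pre cand r)) - mys A (pre cand r) := by
    rw [pre_succ cand hr]
    exact mys_submod A (pre_mono cand (Nat.le_succ r)) _
  have h2 := h.2 r (Nat.lt_of_succ_lt hr) (cand ⟨r+1, hr⟩)
  unfold gg
  linarith

lemma gg_antitone {A : ι → Finset (Fin m)} {cand : Fin k → Fin m} (h : GoodRun A cand)
    {r r' : ℕ} (hrr : r ≤ r') (hr' : r' < k) : gg A cand r' ≤ gg A cand r := by
  induction r' with
  | zero => cases Nat.le_zero.1 hrr; exact le_rfl
  | succ n ih =>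
    rcases Nat.le_succ_iff.1 hrr with h1 | h1
    · calc gg A cand (n+1) ≤ gg A cand n := gg_succ_le h hr'
      _ ≤ gg A cand r := ih h1 (Nat.lt_of_succ_lt hr')
    · cases h1; exact le_rfl

lemma marg_le_gg {A : ι → Finset (Fin m)} {cand : Fin k → Fin m} (h : GoodRun A cand)
    {r : ℕ} (hr : r < k) (c : Fin m) :
    mys A (insert c (pre cand r)) - mys A (pre cand r) ≤ gg A cand r := by
  have := h.2 r hr c
  unfold gg; linarith

end BaseRun
section Bridge

variable {n m k : ℕ}

lemma pavScore_mys {C : Type*} [DecidableEq C] (A : Fin n → Finset C) (W : Finset C) :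
    pavScore A W = mys A W := rfl

lemma filter_lt_fin (j : Fin k) :
    (Finset.univ.filter (fun j' : Fin k => j' < j)) =
    (Finset.univ.filter (fun j' : Fin k => (j':ℕ) < (j:ℕ))) := by
  apply Finset.filter_congr
  intro x _
  exact Fin.lt_def

lemma GoodRun.of_isSeqPAVRun {A : Fin n → Finset (Fin m)} {cand : Fin k → Fin m}
    (h : IsSeqPAVRun A k cand) : GoodRun A cand := by
  refine ⟨h.1, ?_⟩
  intro r hr c
  have hS : Finset.image cand (Finset.univ.filter (fun j' : Fin k => j' < (⟨r, hr⟩ : Fin k))) =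
      pre cand r := by
    rw [filter_lt_fin]
    rfl
  have hpres : pre cand (r+1) = insert (cand ⟨r, hr⟩) (pre cand r) := pre_succ cand hr
  by_cases hc : c ∈ pre cand r
  · rw [Finset.insert_eq_self.2 hc, hpres]
    exact mys_mono A (Finset.subset_insert _ _)
  · have hcond : ∀ j' : Fin k, j' < (⟨r, hr⟩ : Fin k) → cand j' ≠ c := by
      intro j' hj' hcc
      exact hc (mem_pre.2 ⟨j', hj', hcc⟩)
    have := h.2 ⟨r, hr⟩ c hcond
    rw [hS] at this
    rw [pavScore_mys, pavScore_mys] at this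
    rw [hpres]
    exact this

lemma runLastDelta_eq_gg {A : Fin n → Finset (Fin m)} {cand : Fin k → Fin m}
    (hinj : Function.Injective cand) (hk : 0 < k) :
    runLastDelta A cand hk = gg A cand (k-1) / n := by
  have hk1 : k - 1 < k := Nat.sub_lt hk Nat.one_pos
  have hk2 : k - 1 + 1 = k := Nat.succ_pred_eq_of_pos hk
  have h1 : Finset.image cand Finset.univ = pre cand k := (pre_k cand le_rfl).symm
  have h2 : pre cand k = insert (cand ⟨k-1, hk1⟩) (pre cand (k-1)) := by
    have := pre_succ cand hk1
    rw [hk2] at this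
    exact this
  have h3 : (Finset.image cand Finset.univ).erase (cand ⟨k-1, hk1⟩) = pre cand (k-1) := by
    rw [h1, h2, Finset.erase_insert (cand_notMem_pre hinj hk1)]
  have h4 : gg A cand (k-1) = mys A (pre cand k) - mys A (pre cand (k-1)) := by
    unfold gg
    rw [hk2]
  unfold runLastDelta
  rw [h3, h1, pavScore_mys, pavScore_mys, h4]

end Bridge
section TrimDup

variable {ι : Type*} [Fintype ι] {m k : ℕ}

lemma pre_subset_image (cand : Fin k → Fin m) (r : ℕ) :
    pre cand r ⊆ Finset.image cand Finset.univ :=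
  Finset.image_subset_image (Finset.filter_subset _ _)

/-- trimmed profile: approvals restricted to selected candidates -/
def trimP (A : ι → Finset (Fin m)) (cand : Fin k → Fin m) : ι → Finset (Fin m) :=
  fun i => A i ∩ Finset.image cand Finset.univ

lemma mys_trim (A : ι → Finset (Fin m)) (cand : Fin k → Fin m) {W : Finset (Fin m)}
    (hW : W ⊆ Finset.image cand Finset.univ) : mys (trimP A cand) W = mys A W := by
  unfold mys trimP
  apply Finset.sum_congr rfl
  intro i _
  congr 2
  ext c
  simp only [Finset.mem_inter]
  constructor
  · tauto
  · intro hc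
    exact ⟨⟨hc.1, hW hc.2⟩, hc.2⟩

lemma trimP_subset (A : ι → Finset (Fin m)) (cand : Fin k → Fin m) (i : ι) :
    trimP A cand i ⊆ Finset.image cand Finset.univ := Finset.inter_subset_right

lemma GoodRun.trim {A : ι → Finset (Fin m)} {cand : Fin k → Fin m} (h : GoodRun A cand) :
    GoodRun (trimP A cand) cand := by
  refine ⟨h.1, ?_⟩
  intro r hr c
  by_cases hc : c ∈ Finset.image cand Finset.univ
  · have h1 : insert c (pre cand r) ⊆ Finset.image cand Finset.univ :=
      Finset.insert_subset hc (pre_subset_image cand r)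
    rw [mys_trim A cand h1, mys_trim A cand (pre_subset_image cand (r+1))]
    exact h.2 r hr c
  · have h1 : ∀ i, c ∉ trimP A cand i := by
      intro i hi
      exact hc (Finset.mem_of_mem_inter_right hi)
    rw [mys_insert_notmem_all _ h1]
    exact mys_mono _ (pre_mono cand (Nat.le_succ r))

lemma gg_trim (A : ι → Finset (Fin m)) (cand : Fin k → Fin m) (r : ℕ) :
    gg (trimP A cand) cand r = gg A cand r := by
  unfold gg
  rw [mys_trim A cand (pre_subset_image cand _), mys_trim A cand (pre_subset_image cand _)]

/-- duplicated profile -/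
def dupP (c : ℕ) (A : ι → Finset (Fin m)) : (Fin c × ι) → Finset (Fin m) :=
  fun p => A p.2

lemma mys_dup (c : ℕ) (A : ι → Finset (Fin m)) (W : Finset (Fin m)) :
    mys (dupP c A) W = c * mys A W := by
  unfold mys dupP
  rw [Fintype.sum_prod_type]
  simp [Finset.sum_const, mul_comm]

lemma GoodRun.dup {A : ι → Finset (Fin m)} {cand : Fin k → Fin m} (h : GoodRun A cand)
    (c : ℕ) : GoodRun (dupP c A) cand := by
  refine ⟨h.1, ?_⟩
  intro r hr cc
  rw [mys_dup, mys_dup]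
  have := h.2 r hr cc
  have hc : (0:ℝ) ≤ c := by positivity
  exact mul_le_mul_of_nonneg_left this hc

lemma gg_dup (c : ℕ) (A : ι → Finset (Fin m)) (cand : Fin k → Fin m) (r : ℕ) :
    gg (dupP c A) cand r = c * gg A cand r := by
  unfold gg
  rw [mys_dup, mys_dup]
  ring

end TrimDup
section Composite

variable {m k ℓ s t v : ℕ} {ιA : Type*} [Fintype ιA]

/-- the `j`-th common candidate of the large group, as element of `Fin ℓ` -/
def xof (hsl : s ≤ ℓ) (j : Fin s) : Fin ℓ := ⟨j.1, lt_of_lt_of_le j.2 hsl⟩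

/-- the composite profile: `t` copies of the base profile, `v` voters approving the
`ℓ` common candidates, and `s` boosting blocks -/
def Bc (A : ιA → Finset (Fin m)) (t v : ℕ) (hsl : s ≤ ℓ) :
    (Fin t × ιA) ⊕ (Fin v ⊕ (Fin s × ιA)) → Finset ((Fin t × Fin m) ⊕ Fin ℓ)
  | Sum.inl (i, w) => (A w).image (fun c => Sum.inl (i, c))
  | Sum.inr (Sum.inl _) => Finset.univ.image Sum.inr
  | Sum.inr (Sum.inr (j, _)) => {Sum.inr (xof hsl j)}

lemma div_lt_of_ccand (ht : 0 < t) (p : Fin (s + t*k)) (h : ¬ (p:ℕ) < s) :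
    ((p:ℕ) - s) / t < k := by
  have hp : (p:ℕ) - s < t * k := by
    have := p.2; omega
  rw [Nat.div_lt_iff_lt_mul ht]
  exact Nat.lt_of_lt_of_eq hp (Nat.mul_comm t k)

/-- the composite run: first the `s` common candidates, then the copies round-robin -/
def ccand (cand : Fin k → Fin m) (ht : 0 < t) (hsl : s ≤ ℓ) (p : Fin (s + t*k)) :
    (Fin t × Fin m) ⊕ Fin ℓ :=
  if h : (p:ℕ) < s then Sum.inr (xof hsl ⟨p, h⟩)
  else Sum.inl (⟨((p:ℕ) - s) % t, Nat.mod_lt _ ht⟩,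
       cand ⟨((p:ℕ) - s) / t, div_lt_of_ccand ht p h⟩)

/-- prefix of the composite run -/
def SpN (cand : Fin k → Fin m) (ht : 0 < t) (hsl : s ≤ ℓ) (P : ℕ) :
    Finset ((Fin t × Fin m) ⊕ Fin ℓ) :=
  (Finset.univ.filter (fun q : Fin (s + t*k) => (q:ℕ) < P)).image (ccand cand ht hsl)

def pullC (i : Fin t) (W : Finset ((Fin t × Fin m) ⊕ Fin ℓ)) : Finset (Fin m) :=
  Finset.univ.filter (fun c => Sum.inl (i, c) ∈ W)

def xcnt (W : Finset ((Fin t × Fin m) ⊕ Fin ℓ)) : ℕ :=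
  (Finset.univ.filter (fun j : Fin ℓ => Sum.inr j ∈ W)).card

def bcnt (hsl : s ≤ ℓ) (W : Finset ((Fin t × Fin m) ⊕ Fin ℓ)) : ℕ :=
  (Finset.univ.filter (fun j : Fin s => Sum.inr (xof hsl j) ∈ W)).card

def rho (t : ℕ) (i : Fin t) (a : ℕ) : ℕ := a / t + if (i:ℕ) < a % t then 1 else 0

lemma rt_lt_iff (ht : 0 < t) (i : Fin t) (r a : ℕ) :
    r * t + (i:ℕ) < a ↔ r < rho t i a := by
  have hdm : t * (a / t) + a % t = a := Nat.div_add_mod a t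
  have he : a % t < t := Nat.mod_lt _ ht
  have hi : (i:ℕ) < t := i.2
  have hmul : ∀ x y : ℕ, x ≤ y → x * t ≤ y * t := fun x y h => Nat.mul_le_mul_right t h
  unfold rho
  constructor
  · intro h
    rcases Nat.lt_trichotomy r (a / t) with hr | hr | hr
    · omega
    · have e : r * t = t * (a / t) := by rw [hr, Nat.mul_comm]
      have h2 : (i:ℕ) < a % t := by omega
      simp only [h2, if_pos]
      omega
    · exfalso
      have h2 : (a / t + 1) * t ≤ r * t := hmul _ _ hr
      have e1 : (a/t + 1) * t = t * (a/t) + t := by ring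
      omega
  · intro h
    by_cases hie : (i:ℕ) < a % t
    · have hr : r ≤ a / t := by simp only [hie, if_pos] at h; omega
      have h2 : r * t ≤ (a/t) * t := hmul _ _ hr
      have e1 : (a/t) * t = t * (a/t) := Nat.mul_comm _ _
      omega
    · have hr : r + 1 ≤ a / t := by simp only [hie, if_neg, not_false_iff] at h; omega
      have h2 : (r+1) * t ≤ (a/t) * t := hmul _ _ hr
      have e1 : (r+1)*t = r*t + t := by ring
      have e2 : (a/t) * t = t * (a/t) := Nat.mul_comm _ _
      omega

lemma rho_zero (i : Fin t) : rho t i 0 = 0 := by simp [rho]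

lemma pre_zero (cand : Fin k → Fin m) : pre cand 0 = ∅ := by
  unfold pre
  convert Finset.image_empty cand
  apply Finset.filter_false_of_mem
  intro j _
  omega

lemma mem_SpN_inr {cand : Fin k → Fin m} (ht : 0 < t) (hsl : s ≤ ℓ) {P : ℕ} {j : Fin ℓ} :
    (Sum.inr j : (Fin t × Fin m) ⊕ Fin ℓ) ∈ SpN cand ht hsl P ↔ (j:ℕ) < min P s := by
  unfold SpN
  simp only [Finset.mem_image, Finset.mem_filter, Finset.mem_univ, true_and]
  constructor
  · rintro ⟨q, hq, hcq⟩
    unfold ccand at hcq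
    by_cases h : (q:ℕ) < s
    · rw [dif_pos h] at hcq
      have : xof hsl ⟨q, h⟩ = j := by exact Sum.inr.inj hcq
      have hval : (q:ℕ) = (j:ℕ) := by
        have := congrArg Fin.val this; simpa [xof] using this
      omega
    · rw [dif_neg h] at hcq
      exact absurd hcq (by simp)
  · intro hj
    have hjs : (j:ℕ) < s := by omega
    have hjq : (j:ℕ) < s + t*k := by omega
    refine ⟨⟨(j:ℕ), hjq⟩, by show (j:ℕ) < P; omega, ?_⟩
    unfold ccand
    rw [dif_pos (by show (j:ℕ) < s; omega)]
    congr 1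

lemma pull_SpN {cand : Fin k → Fin m} (ht : 0 < t) (hsl : s ≤ ℓ) {P : ℕ}
    (hP : P ≤ s + t*k) (i : Fin t) :
    pullC i (SpN cand ht hsl P) = pre cand (rho t i (P - s)) := by
  ext c
  unfold pullC SpN
  simp only [Finset.mem_filter, Finset.mem_univ, true_and, Finset.mem_image]
  rw [mem_pre]
  constructor
  · rintro ⟨q, hq, hcq⟩
    unfold ccand at hcq
    by_cases h : (q:ℕ) < s
    · rw [dif_pos h] at hcq; exact absurd hcq (by simp)
    · rw [dif_neg h] at hcq
      have h1 := Sum.inl.inj hcq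
      have h2 : (((q:ℕ) - s) % t : ℕ) = (i:ℕ) := by
        have := congrArg (fun z => (Prod.fst z : Fin t).val) h1; simpa using this
      have h3 : cand ⟨((q:ℕ) - s) / t, div_lt_of_ccand ht q h⟩ = c := by
        have := congrArg Prod.snd h1; simpa using this
      refine ⟨⟨((q:ℕ) - s) / t, div_lt_of_ccand ht q h⟩, ?_, h3⟩
      rw [← rt_lt_iff ht]
      have hdm : t * (((q:ℕ) - s) / t) + ((q:ℕ) - s) % t = (q:ℕ) - s := Nat.div_add_mod _ t
      have e2 : ((q:ℕ)-s)/t * t = t * (((q:ℕ)-s)/t) := Nat.mul_comm _ _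
      show ((q:ℕ)-s)/t * t + (i:ℕ) < P - s
      omega
  · rintro ⟨jr, hjr, hc⟩
    have ha : (jr:ℕ) * t + (i:ℕ) < P - s := (rt_lt_iff ht i jr (P - s)).2 hjr
    set a := (jr:ℕ) * t + (i:ℕ) with hadef
    have hq : s + a < s + t*k := by
      have : s + a < P := by omega
      omega
    refine ⟨⟨s + a, hq⟩, by simp; omega, ?_⟩
    unfold ccand
    have hns : ¬ (s + a < s) := by omega
    rw [dif_neg (by simpa using hns)]
    have hsub : (s + a) - s = a := by omega
    have hmod : a % t = (i:ℕ) := by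
      rw [hadef, add_comm, Nat.add_mul_mod_self_right]
      exact Nat.mod_eq_of_lt i.2
    have hdiv : a / t = (jr:ℕ) := by
      rw [hadef, add_comm, Nat.add_mul_div_right _ _ ht, Nat.div_eq_of_lt i.2]
      omega
    congr 1
    refine Prod.ext ?_ ?_
    · apply Fin.ext
      simp only [hsub]
      exact hmod
    · simp only [hsub]
      rw [← hc]
      congr 1
      apply Fin.ext
      simp only [hdiv]

lemma card_filter_val_lt (N P : ℕ) :
    (Finset.univ.filter (fun j : Fin N => (j:ℕ) < P)).card = min P N := by
  rw [← Finset.card_range (min P N), ← Finset.card_image_of_injective _ Fin.val_injective]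
  congr 1
  ext a
  simp only [Finset.mem_image, Finset.mem_filter, Finset.mem_univ, true_and, Finset.mem_range]
  constructor
  · rintro ⟨j, hj, rfl⟩; omega
  · intro ha
    exact ⟨⟨a, by omega⟩, by show a < P; omega, rfl⟩

lemma xcnt_SpN {cand : Fin k → Fin m} (ht : 0 < t) (hsl : s ≤ ℓ) (P : ℕ) :
    xcnt (SpN cand ht hsl P) = min P s := by
  unfold xcnt
  have : (Finset.univ.filter (fun j : Fin ℓ => Sum.inr j ∈ SpN cand ht hsl P)) =
      (Finset.univ.filter (fun j : Fin ℓ => (j:ℕ) < min P s)) := by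
    apply Finset.filter_congr
    intro j _
    simp [mem_SpN_inr ht hsl]
  rw [this, card_filter_val_lt]
  omega

lemma bcnt_SpN {cand : Fin k → Fin m} (ht : 0 < t) (hsl : s ≤ ℓ) (P : ℕ) :
    bcnt hsl (SpN cand ht hsl P) = min P s := by
  unfold bcnt
  have : (Finset.univ.filter (fun j : Fin s => Sum.inr (xof hsl j) ∈ SpN cand ht hsl P)) =
      (Finset.univ.filter (fun j : Fin s => (j:ℕ) < min P s)) := by
    apply Finset.filter_congr
    intro j _
    rw [mem_SpN_inr ht hsl]
    simp [xof]
  rw [this, card_filter_val_lt]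
  omega

end Composite
section Decomp

variable {m k ℓ s t v : ℕ} {ιA : Type*} [Fintype ιA]

lemma card_image_inl_inter (i : Fin t) (sA : Finset (Fin m))
    (W : Finset ((Fin t × Fin m) ⊕ Fin ℓ)) :
    ((sA.image (fun c => (Sum.inl (i, c) : (Fin t × Fin m) ⊕ Fin ℓ))) ∩ W).card =
    (sA ∩ pullC i W).card := by
  have hinj : Function.Injective (fun c : Fin m => (Sum.inl (i, c) : (Fin t × Fin m) ⊕ Fin ℓ)) := by
    intro a b h
    simpa using h
  have h1 : (sA.image (fun c => (Sum.inl (i, c) : (Fin t × Fin m) ⊕ Fin ℓ))) ∩ W =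
      (sA ∩ pullC i W).image (fun c => (Sum.inl (i, c) : (Fin t × Fin m) ⊕ Fin ℓ)) := by
    ext y
    simp only [Finset.mem_inter, Finset.mem_image, pullC, Finset.mem_filter, Finset.mem_univ,
      true_and]
    constructor
    · rintro ⟨⟨c, hc, rfl⟩, hy⟩
      exact ⟨c, ⟨hc, hy⟩, rfl⟩
    · rintro ⟨c, ⟨hc, hw⟩, rfl⟩
      exact ⟨⟨c, hc, rfl⟩, hw⟩
  rw [h1, Finset.card_image_of_injective _ hinj]

lemma card_image_inr_inter (W : Finset ((Fin t × Fin m) ⊕ Fin ℓ)) :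
    (((Finset.univ : Finset (Fin ℓ)).image Sum.inr) ∩ W).card = xcnt W := by
  have hinj : Function.Injective (Sum.inr : Fin ℓ → (Fin t × Fin m) ⊕ Fin ℓ) :=
    Sum.inr_injective
  have h1 : ((Finset.univ : Finset (Fin ℓ)).image Sum.inr) ∩ W =
      (Finset.univ.filter (fun j : Fin ℓ => Sum.inr j ∈ W)).image Sum.inr := by
    ext y
    simp only [Finset.mem_inter, Finset.mem_image, Finset.mem_filter, Finset.mem_univ, true_and]
    constructor
    · rintro ⟨⟨j, _, rfl⟩, hy⟩
      exact ⟨j, hy, rfl⟩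
    · rintro ⟨j, hj, rfl⟩
      exact ⟨⟨j, rfl⟩, hj⟩
  rw [h1, Finset.card_image_of_injective _ hinj]
  rfl

lemma mys_Bc (A : ιA → Finset (Fin m)) (hsl : s ≤ ℓ)
    (W : Finset ((Fin t × Fin m) ⊕ Fin ℓ)) :
    mys (Bc A t v hsl) W = (∑ i : Fin t, mys A (pullC i W)) + (v:ℝ) * harm (xcnt W)
      + (Fintype.card ιA : ℝ) * (bcnt hsl W) := by
  unfold mys
  rw [Fintype.sum_sum_type, Fintype.sum_sum_type]
  have e1 : ∑ x : Fin t × ιA, harm ((Bc A t v hsl (Sum.inl x) ∩ W).card)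
      = ∑ i : Fin t, mys A (pullC i W) := by
    rw [Fintype.sum_prod_type]
    apply Finset.sum_congr rfl
    intro i _
    unfold mys
    apply Finset.sum_congr rfl
    intro w _
    show harm (((A w).image (fun c => (Sum.inl (i, c) : (Fin t × Fin m) ⊕ Fin ℓ)) ∩ W).card) = _
    rw [card_image_inl_inter]
  have e2 : ∑ _x : Fin v, harm ((Bc A t v hsl (Sum.inr (Sum.inl _x)) ∩ W).card)
      = (v:ℝ) * harm (xcnt W) := by
    have : ∀ x : Fin v, harm ((Bc A t v hsl (Sum.inr (Sum.inl x)) ∩ W).card)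
        = harm (xcnt W) := by
      intro x
      show harm ((((Finset.univ : Finset (Fin ℓ)).image Sum.inr) ∩ W).card) = _
      rw [card_image_inr_inter]
    rw [Finset.sum_congr rfl (fun x _ => this x)]
    simp [Finset.sum_const, Finset.card_univ]
  have e3 : ∑ x : Fin s × ιA, harm ((Bc A t v hsl (Sum.inr (Sum.inr x)) ∩ W).card)
      = (Fintype.card ιA : ℝ) * (bcnt hsl W) := by
    rw [Fintype.sum_prod_type]
    have hterm : ∀ j : Fin s, ∀ w : ιA, harm ((Bc A t v hsl (Sum.inr (Sum.inr (j, w))) ∩ W).card)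
        = if Sum.inr (xof hsl j) ∈ W then (1:ℝ) else 0 := by
      intro j w
      show harm ((({(Sum.inr (xof hsl j) : (Fin t × Fin m) ⊕ Fin ℓ)}) ∩ W).card) = _
      by_cases hj : (Sum.inr (xof hsl j) : (Fin t × Fin m) ⊕ Fin ℓ) ∈ W
      · rw [Finset.singleton_inter_of_mem hj, if_pos hj, Finset.card_singleton, harm_one]
      · rw [Finset.singleton_inter_of_notMem hj, if_neg hj, Finset.card_empty, harm_zero]
    calc ∑ j : Fin s, ∑ w : ιA, harm ((Bc A t v hsl (Sum.inr (Sum.inr (j, w))) ∩ W).card)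
        = ∑ j : Fin s, ∑ _w : ιA, (if Sum.inr (xof hsl j) ∈ W then (1:ℝ) else 0) := by
          apply Finset.sum_congr rfl; intro j _
          apply Finset.sum_congr rfl; intro w _
          exact hterm j w
      _ = ∑ j : Fin s, (Fintype.card ιA : ℝ) * (if Sum.inr (xof hsl j) ∈ W then (1:ℝ) else 0) := by
          apply Finset.sum_congr rfl; intro j _
          simp [Finset.sum_const, Finset.card_univ]
      _ = (Fintype.card ιA : ℝ) * ∑ j : Fin s, (if Sum.inr (xof hsl j) ∈ W then (1:ℝ) else 0) := by
          rw [Finset.mul_sum]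
      _ = (Fintype.card ιA : ℝ) * (bcnt hsl W) := by
          have hb : ((bcnt hsl W : ℕ) : ℝ) = ∑ j : Fin s, (if Sum.inr (xof hsl j) ∈ W then (1:ℝ) else 0) := by
            unfold bcnt
            rw [Finset.card_filter]
            push_cast
            apply Finset.sum_congr rfl
            intro j _
            split <;> rfl
          rw [hb]
  rw [e1, e2, e3]
  unfold mys
  ring
end Decomp
section Marg

variable {m k ℓ s t v : ℕ} {ιA : Type*} [Fintype ιA]

lemma pullC_insert_inl_self (i : Fin t) (c : Fin m) (W : Finset ((Fin t × Fin m) ⊕ Fin ℓ)) :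
    pullC i (insert (Sum.inl (i, c)) W) = insert c (pullC i W) := by
  ext c'
  simp only [pullC, Finset.mem_filter, Finset.mem_univ, true_and, Finset.mem_insert,
    Sum.inl.injEq, Prod.mk.injEq]

lemma pullC_insert_inl_ne {i i' : Fin t} (h : i' ≠ i) (c : Fin m)
    (W : Finset ((Fin t × Fin m) ⊕ Fin ℓ)) :
    pullC i (insert (Sum.inl (i', c)) W) = pullC i W := by
  ext c'
  simp only [pullC, Finset.mem_filter, Finset.mem_univ, true_and, Finset.mem_insert,
    Sum.inl.injEq, Prod.mk.injEq]
  constructor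
  · rintro (⟨h1, h2⟩ | h1)
    · exact absurd h1.symm h
    · exact h1
  · intro h1; exact Or.inr h1

lemma pullC_insert_inr (i : Fin t) (j : Fin ℓ) (W : Finset ((Fin t × Fin m) ⊕ Fin ℓ)) :
    pullC i (insert (Sum.inr j) W) = pullC i W := by
  ext c'
  simp [pullC]

lemma xcnt_insert_inl (z : Fin t × Fin m) (W : Finset ((Fin t × Fin m) ⊕ Fin ℓ)) :
    xcnt (insert (Sum.inl z) W) = xcnt W := by
  unfold xcnt
  congr 1
  apply Finset.filter_congr
  intro j _
  simp

lemma bcnt_insert_inl (hsl : s ≤ ℓ) (z : Fin t × Fin m)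
    (W : Finset ((Fin t × Fin m) ⊕ Fin ℓ)) :
    bcnt hsl (insert (Sum.inl z) W) = bcnt hsl W := by
  unfold bcnt
  congr 1
  apply Finset.filter_congr
  intro j _
  simp

lemma xcnt_insert_inr {j : Fin ℓ} {W : Finset ((Fin t × Fin m) ⊕ Fin ℓ)}
    (h : (Sum.inr j : (Fin t × Fin m) ⊕ Fin ℓ) ∉ W) :
    xcnt (insert (Sum.inr j) W) = xcnt W + 1 := by
  unfold xcnt
  have : (Finset.univ.filter (fun j' : Fin ℓ => Sum.inr j' ∈ insert (Sum.inr j) W))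
      = insert j (Finset.univ.filter (fun j' : Fin ℓ => Sum.inr j' ∈ W)) := by
    ext j'
    simp only [Finset.mem_filter, Finset.mem_univ, true_and, Finset.mem_insert, Sum.inr.injEq]
  rw [this, Finset.card_insert_of_notMem (by simp [h])]

lemma bcnt_insert_inr (hsl : s ≤ ℓ) {j : Fin ℓ} {W : Finset ((Fin t × Fin m) ⊕ Fin ℓ)}
    (h : (Sum.inr j : (Fin t × Fin m) ⊕ Fin ℓ) ∉ W) :
    bcnt hsl (insert (Sum.inr j) W) = bcnt hsl W + (if (j:ℕ) < s then 1 else 0) := by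
  unfold bcnt
  by_cases hj : (j:ℕ) < s
  · have : (Finset.univ.filter (fun j' : Fin s => Sum.inr (xof hsl j') ∈ insert (Sum.inr j) W))
        = insert ⟨(j:ℕ), hj⟩ (Finset.univ.filter (fun j' : Fin s => Sum.inr (xof hsl j') ∈ W)) := by
      ext j'
      simp only [Finset.mem_filter, Finset.mem_univ, true_and, Finset.mem_insert, Sum.inr.injEq]
      constructor
      · rintro (h1 | h1)
        · left
          apply Fin.ext
          have := congrArg Fin.val h1
          simpa [xof] using this
        · exact Or.inr h1
      · rintro (rfl | h1)
        · left
          apply Fin.ext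
          rfl
        · exact Or.inr h1
    rw [this, Finset.card_insert_of_notMem, if_pos hj]
    simp only [Finset.mem_filter, Finset.mem_univ, true_and]
    intro hmem
    apply h
    have : xof hsl ⟨(j:ℕ), hj⟩ = j := Fin.ext rfl
    rwa [this] at hmem
  · rw [if_neg hj, Nat.add_zero]
    congr 1
    apply Finset.filter_congr
    intro j' _
    simp only [Finset.mem_insert, Sum.inr.injEq]
    constructor
    · rintro (h1 | h1)
      · exfalso
        apply hj
        have := congrArg Fin.val h1
        simp [xof] at this
        omega
      · exact h1
    · exact Or.inr

lemma margC_inl (A : ιA → Finset (Fin m)) (hsl : s ≤ ℓ) (i : Fin t) (c : Fin m)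
    (W : Finset ((Fin t × Fin m) ⊕ Fin ℓ)) :
    mys (Bc A t v hsl) (insert (Sum.inl (i, c)) W) =
      mys (Bc A t v hsl) W + (mys A (insert c (pullC i W)) - mys A (pullC i W)) := by
  rw [mys_Bc, mys_Bc, xcnt_insert_inl, bcnt_insert_inl]
  have hsum : ∑ i' : Fin t, mys A (pullC i' (insert (Sum.inl (i, c)) W))
      = (∑ i' : Fin t, mys A (pullC i' W)) + (mys A (insert c (pullC i W)) - mys A (pullC i W)) := by
    rw [← Finset.sum_erase_add _ _ (Finset.mem_univ i), ← Finset.sum_erase_add _ _ (Finset.mem_univ i)]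
    have h1 : ∀ i' ∈ Finset.univ.erase i, mys A (pullC i' (insert (Sum.inl (i, c)) W))
        = mys A (pullC i' W) := by
      intro i' hi'
      rw [pullC_insert_inl_ne (Ne.symm (Finset.ne_of_mem_erase hi')) c]
    rw [Finset.sum_congr rfl h1, pullC_insert_inl_self]
    ring
  rw [hsum]
  ring

lemma margC_inr (A : ιA → Finset (Fin m)) (hsl : s ≤ ℓ) {j : Fin ℓ}
    {W : Finset ((Fin t × Fin m) ⊕ Fin ℓ)}
    (h : (Sum.inr j : (Fin t × Fin m) ⊕ Fin ℓ) ∉ W) :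
    mys (Bc A t v hsl) (insert (Sum.inr j) W) =
      mys (Bc A t v hsl) W + (v:ℝ) * (harm (xcnt W + 1) - harm (xcnt W))
        + (if (j:ℕ) < s then (Fintype.card ιA : ℝ) else 0) := by
  rw [mys_Bc, mys_Bc, xcnt_insert_inr h, bcnt_insert_inr hsl h]
  have hsum : ∑ i' : Fin t, mys A (pullC i' (insert (Sum.inr j) W))
      = ∑ i' : Fin t, mys A (pullC i' W) := by
    apply Finset.sum_congr rfl
    intro i' _
    rw [pullC_insert_inr]
  rw [hsum]
  push_cast
  split <;> ring

end Marg
section Main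

variable {m k ℓ s t v : ℕ} {ιA : Type*} [Fintype ιA]

lemma ccand_inj (cand : Fin k → Fin m) (hinj : Function.Injective cand)
    (ht : 0 < t) (hsl : s ≤ ℓ) : Function.Injective (ccand cand ht hsl) := by
  intro p q hpq
  unfold ccand at hpq
  by_cases hp : (p:ℕ) < s <;> by_cases hq : (q:ℕ) < s
  · rw [dif_pos hp, dif_pos hq] at hpq
    have := congrArg Fin.val (Sum.inr.inj hpq)
    simp [xof] at this
    exact Fin.ext this
  · rw [dif_pos hp, dif_neg hq] at hpq
    exact absurd hpq (by simp)
  · rw [dif_neg hp, dif_pos hq] at hpq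
    exact absurd hpq (by simp)
  · rw [dif_neg hp, dif_neg hq] at hpq
    have h1 := Sum.inl.inj hpq
    have hmod : ((p:ℕ) - s) % t = ((q:ℕ) - s) % t := by
      have := congrArg (fun z => (Prod.fst z : Fin t).val) h1; simpa using this
    have hdiv : ((p:ℕ) - s) / t = ((q:ℕ) - s) / t := by
      have h2 : cand ⟨((p:ℕ) - s) / t, div_lt_of_ccand ht p hp⟩ =
          cand ⟨((q:ℕ) - s) / t, div_lt_of_ccand ht q hq⟩ := by
        have := congrArg Prod.snd h1; simpa using this
      have := congrArg Fin.val (hinj h2)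
      simpa using this
    have e1 : t * (((p:ℕ) - s) / t) + ((p:ℕ) - s) % t = (p:ℕ) - s := Nat.div_add_mod _ t
    have e2 : t * (((q:ℕ) - s) / t) + ((q:ℕ) - s) % t = (q:ℕ) - s := Nat.div_add_mod _ t
    have e3 : t * (((p:ℕ) - s) / t) = t * (((q:ℕ) - s) / t) := by rw [hdiv]
    apply Fin.ext
    omega

lemma SpN_full (cand : Fin k → Fin m) (ht : 0 < t) (hsl : s ≤ ℓ) :
    SpN cand ht hsl (s + t*k) = Finset.image (ccand cand ht hsl) Finset.univ := by
  unfold SpN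
  congr 1
  apply Finset.filter_true_of_mem
  intro q _
  exact q.2

theorem main_step (A : ιA → Finset (Fin m)) (cand : Fin k → Fin m)
    (hA : GoodRun A cand) (htrim : ∀ w, A w ⊆ Finset.image cand Finset.univ)
    (hk : 0 < k) (ht : 0 < t) (hsl : s ≤ ℓ)
    (hv : (v:ℝ) ≤ ((s:ℝ)+1) * gg A cand (k-1)) (p : Fin (s + t*k))
    (c'' : (Fin t × Fin m) ⊕ Fin ℓ) :
    mys (Bc A t v hsl) (insert c'' (SpN cand ht hsl (p:ℕ))) ≤
      mys (Bc A t v hsl) (insert (ccand cand ht hsl p) (SpN cand ht hsl (p:ℕ))) := by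
  set W := SpN cand ht hsl (p:ℕ) with hW
  have hPle : (p:ℕ) ≤ s + t*k := le_of_lt p.2
  -- trivial case : c'' already selected
  by_cases hmem : c'' ∈ W
  · rw [Finset.insert_eq_self.2 hmem]
    exact mys_mono _ (Finset.subset_insert _ _)
  -- gg is nonnegative and bounds
  have hggpos : ∀ r, 0 ≤ gg A cand r := gg_nonneg A cand
  by_cases hP : (p:ℕ) < s
  -- x-phase
  · have hxc : xcnt W = (p:ℕ) := by
      rw [hW, xcnt_SpN ht hsl]; omega
    have hchos : ccand cand ht hsl p = Sum.inr (xof hsl ⟨(p:ℕ), hP⟩) := dif_pos hP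
    have hchosnm : (Sum.inr (xof hsl ⟨(p:ℕ), hP⟩) : (Fin t × Fin m) ⊕ Fin ℓ) ∉ W := by
      rw [hW, mem_SpN_inr ht hsl]
      show ¬ ((p:ℕ) < min (p:ℕ) s)
      omega
    have hRHS : mys (Bc A t v hsl) (insert (ccand cand ht hsl p) W)
        = mys (Bc A t v hsl) W + (v:ℝ) * (harm (xcnt W + 1) - harm (xcnt W))
          + (Fintype.card ιA : ℝ) := by
      rw [hchos, margC_inr A hsl hchosnm]
      rw [if_pos (by show (p:ℕ) < s; exact hP)]
    have hvpos : (0:ℝ) ≤ (v:ℝ) * (harm (xcnt W + 1) - harm (xcnt W)) := by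
      have := harm_mono (Nat.le_succ (xcnt W))
      have hv0 : (0:ℝ) ≤ (v:ℝ) := by positivity
      nlinarith
    rcases c'' with ⟨i, c⟩ | j
    · -- a copy candidate
      rw [margC_inl A hsl i c W]
      have hpull : pullC i W = ∅ := by
        rw [hW, pull_SpN ht hsl hPle]
        have : (p:ℕ) - s = 0 := by omega
        rw [this, rho_zero, pre_zero]
      rw [hpull]
      have h1 : mys A (insert c (∅ : Finset (Fin m))) ≤ (Fintype.card ιA : ℝ) :=
        mys_singleton_le A c
      have h2 : mys A (∅ : Finset (Fin m)) = 0 := mys_empty A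
      rw [hRHS]
      linarith
    · -- another x candidate
      rw [margC_inr A hsl hmem, hRHS]
      have hite : (if (j:ℕ) < s then (Fintype.card ιA : ℝ) else 0) ≤ (Fintype.card ιA : ℝ) := by
        split
        · exact le_rfl
        · positivity
      linarith
  -- copy phase
  · set a := (p:ℕ) - s with hadef
    have ha : a < t * k := by have := p.2; omega
    have hrK : a / t < k := by
      rw [Nat.div_lt_iff_lt_mul ht]
      exact Nat.lt_of_lt_of_eq ha (Nat.mul_comm t k)
    set r := a / t with hrdef
    set i0 : Fin t := ⟨a % t, Nat.mod_lt _ ht⟩ with hi0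
    have hchos : ccand cand ht hsl p = Sum.inl (i0, cand ⟨r, hrK⟩) := dif_neg hP
    have hrho0 : rho t i0 a = r := by
      unfold rho
      have : ¬ ((i0:ℕ) < a % t) := by show ¬ (a % t < a % t); omega
      rw [if_neg this]
      omega
    have hpull0 : pullC i0 W = pre cand r := by
      rw [hW, pull_SpN ht hsl hPle, ← hadef, hrho0]
    have hRHS : mys (Bc A t v hsl) (insert (ccand cand ht hsl p) W)
        = mys (Bc A t v hsl) W + gg A cand r := by
      rw [hchos, margC_inl A hsl, hpull0, ← pre_succ cand hrK]
      unfold gg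
      ring
    rw [hRHS]
    have hggr : gg A cand (k-1) ≤ gg A cand r := gg_antitone hA (by omega) (by omega)
    rcases c'' with ⟨i', c⟩ | j
    · -- copy candidate
      rw [margC_inl A hsl i' c W]
      have hpull' : pullC i' W = pre cand (rho t i' a) := by
        rw [hW, pull_SpN ht hsl hPle, ← hadef]
      have hrhobd : r ≤ rho t i' a ∧ rho t i' a ≤ r + 1 := by
        unfold rho
        split <;> omega
      rw [hpull']
      by_cases hrk' : rho t i' a < k
      · have h1 := marg_le_gg hA hrk' c
        have h2 : gg A cand (rho t i' a) ≤ gg A cand r :=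
          gg_antitone hA hrhobd.1 hrk'
        linarith
      · have hrhoeq : rho t i' a = k := by omega
        rw [hrhoeq]
        have hprek : pre cand k = Finset.image cand Finset.univ := pre_k cand le_rfl
        by_cases hc : c ∈ pre cand k
        · rw [Finset.insert_eq_self.2 hc]
          have := hggpos r
          linarith
        · have hnm : ∀ w, c ∉ A w := by
            intro w hw
            exact hc (hprek ▸ htrim w hw)
          rw [mys_insert_notmem_all A hnm]
          have := hggpos r
          linarith
    · -- an x candidate, not yet chosen
      rw [margC_inr A hsl hmem]
      have hxc : xcnt W = s := by
        rw [hW, xcnt_SpN ht hsl]; omega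
      have hjns : ¬ ((j:ℕ) < s) := by
        intro hjs
        apply hmem
        rw [hW, mem_SpN_inr ht hsl]
        omega
      rw [if_neg hjns, hxc]
      have hharm : harm (s+1) - harm s = 1/((s:ℝ)+1) := by
        rw [harm_succ]
        push_cast
        ring
      rw [hharm]
      have hs1 : (0:ℝ) < (s:ℝ)+1 := by positivity
      have hstep : (v:ℝ) * (1/((s:ℝ)+1)) ≤ gg A cand (k-1) := by
        rw [mul_one_div, div_le_iff₀ hs1]
        calc (v:ℝ) ≤ ((s:ℝ)+1) * gg A cand (k-1) := hv
        _ = gg A cand (k-1) * ((s:ℝ)+1) := by ring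
      linarith

end Main
section Transport

lemma card_inter_image {γ γ' : Type*} [DecidableEq γ] [DecidableEq γ'] (e : γ ≃ γ')
    (sA : Finset γ) (X : Finset γ') :
    ((sA.image e) ∩ X).card = (sA ∩ X.image e.symm).card := by
  have h1 : (sA ∩ X.image e.symm).image e = (sA.image e) ∩ X := by
    rw [Finset.image_inter _ _ e.injective]
    congr 1
    rw [Finset.image_image]
    simp
  rw [← h1, Finset.card_image_of_injective _ e.injective]

lemma pav_transport {γ ιI : Type*} [Fintype γ] [DecidableEq γ] [Fintype ιI]
    (B : ιI → Finset γ) (X : Finset (Fin (Fintype.card γ))) :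
    pavScore (fun iv => (B ((Fintype.equivFin ιI).symm iv)).image (Fintype.equivFin γ)) X =
      mys B (X.image (Fintype.equivFin γ).symm) := by
  rw [pavScore_mys]
  unfold mys
  rw [← Equiv.sum_comp (Fintype.equivFin ιI)]
  apply Finset.sum_congr rfl
  intro u _
  simp only [Equiv.symm_apply_apply]
  rw [card_inter_image]

lemma image_symm_insert_image {γ : Type*} [Fintype γ] [DecidableEq γ] {K : ℕ}
    (cc : Fin K → γ) (F : Finset (Fin K)) (c' : Fin (Fintype.card γ)) :
    (insert c' (F.image (fun p => Fintype.equivFin γ (cc p)))).image (Fintype.equivFin γ).symm =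
      insert ((Fintype.equivFin γ).symm c') (F.image cc) := by
  rw [Finset.image_insert]
  congr 1
  rw [Finset.image_image]
  apply Finset.image_congr
  intro p _
  simp

lemma isSeqPAVRun_transport {γ ιI : Type*} [Fintype γ] [DecidableEq γ] [Fintype ιI]
    (B : ιI → Finset γ) {K : ℕ} (cc : Fin K → γ) (hinj : Function.Injective cc)
    (hstep : ∀ (p : Fin K) (c'' : γ),
      mys B (insert c'' ((Finset.univ.filter (fun q : Fin K => (q:ℕ) < (p:ℕ))).image cc)) ≤
      mys B (insert (cc p) ((Finset.univ.filter (fun q : Fin K => (q:ℕ) < (p:ℕ))).image cc))) :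
    IsSeqPAVRun (fun iv => (B ((Fintype.equivFin ιI).symm iv)).image (Fintype.equivFin γ)) K
      (fun p => Fintype.equivFin γ (cc p)) := by
  constructor
  · exact fun a b h => hinj ((Fintype.equivFin γ).injective h)
  · intro j c' _
    have hfil : (Finset.univ.filter (fun j' : Fin K => j' < j)) =
        (Finset.univ.filter (fun q : Fin K => (q:ℕ) < (j:ℕ))) := by
      apply Finset.filter_congr
      intro x _
      exact Fin.lt_def
    rw [hfil]
    rw [pav_transport B, pav_transport B, image_symm_insert_image, image_symm_insert_image]
    have h1 := hstep j ((Fintype.equivFin γ).symm c')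
    have h2 : (Fintype.equivFin γ).symm (Fintype.equivFin γ (cc j)) = cc j :=
      Equiv.symm_apply_apply _ _
    rw [h2]
    exact h1

end Transport
section DeltaFacts

/-- the defining set of `deltaSeqPAV` -/
def deltaSet (k : ℕ) : Set ℝ :=
  {x : ℝ | ∃ (n m : ℕ) (A : Fin n → Finset (Fin m)) (cand : Fin k → Fin m) (hk : 0 < k),
    0 < n ∧ IsSeqPAVRun A k cand ∧ x = runLastDelta A cand hk}

lemma deltaSeqPAV_eq (k : ℕ) : deltaSeqPAV k = sSup (deltaSet k) := rfl

lemma mys_unit (k : ℕ) (W : Finset (Fin k)) :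
    mys (fun _ : Fin 1 => (Finset.univ : Finset (Fin k))) W = harm W.card := by
  unfold mys
  simp [Finset.univ_inter]

lemma unit_isRun (k : ℕ) : IsSeqPAVRun (fun _ : Fin 1 => (Finset.univ : Finset (Fin k))) k
    (fun j : Fin k => j) := by
  constructor
  · exact fun a b h => h
  · intro j c' hc'
    set S := Finset.image (fun j' : Fin k => j') (Finset.univ.filter (fun j' : Fin k => j' < j))
      with hS
    have hc'S : c' ∉ S := by
      rw [hS]
      simp only [Finset.mem_image, Finset.mem_filter, Finset.mem_univ, true_and]
      rintro ⟨j', hj', rfl⟩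
      exact hc' j' hj' rfl
    have hjS : j ∉ S := by
      rw [hS]
      simp only [Finset.mem_image, Finset.mem_filter, Finset.mem_univ, true_and]
      rintro ⟨j', hj', rfl⟩
      exact absurd hj' (lt_irrefl _)
    rw [pavScore_mys, pavScore_mys, mys_unit, mys_unit,
      Finset.card_insert_of_notMem hc'S, Finset.card_insert_of_notMem hjS]

lemma unit_mem_deltaSet (k : ℕ) (hk : 0 < k) : (1:ℝ)/k ∈ deltaSet k := by
  refine ⟨1, k, (fun _ => Finset.univ), (fun j => j), hk, Nat.one_pos, unit_isRun k, ?_⟩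
  unfold runLastDelta
  have h1 : Finset.image (fun j : Fin k => j) Finset.univ = (Finset.univ : Finset (Fin k)) := by
    simp
  rw [pavScore_mys, pavScore_mys, mys_unit, mys_unit, h1]
  have hmem : (⟨k-1, Nat.sub_lt hk Nat.one_pos⟩ : Fin k) ∈ (Finset.univ : Finset (Fin k)) :=
    Finset.mem_univ _
  rw [Finset.card_erase_of_mem hmem, Finset.card_univ, Fintype.card_fin]
  have hk1 : k - 1 + 1 = k := Nat.succ_pred_eq_of_pos hk
  have hc1 : ((k-1:ℕ):ℝ) + 1 = (k:ℝ) := by exact_mod_cast congrArg (Nat.cast : ℕ → ℝ) hk1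
  have h3 := harm_succ (k-1)
  rw [hk1] at h3
  rw [h3, hc1]
  simp

lemma deltaSet_bddAbove (k : ℕ) : BddAbove (deltaSet k) := by
  refine ⟨1, ?_⟩
  rintro x ⟨n, m, A, cand, hk, hn, hrun, rfl⟩
  unfold runLastDelta
  set W := Finset.image cand Finset.univ with hWdef
  set c := cand ⟨k-1, Nat.sub_lt hk Nat.one_pos⟩ with hcdef
  have hcW : c ∈ W := by
    rw [hWdef, hcdef]
    exact Finset.mem_image_of_mem cand (Finset.mem_univ _)
  have hdiff : pavScore A W - pavScore A (W.erase c) ≤ (n:ℝ) := by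
    rw [pavScore_mys, pavScore_mys]
    unfold mys
    rw [← Finset.sum_sub_distrib]
    calc ∑ i, (harm ((A i ∩ W).card) - harm ((A i ∩ W.erase c).card))
        ≤ ∑ _i : Fin n, (1:ℝ) := by
          apply Finset.sum_le_sum
          intro i _
          apply harm_sub_le_one
          calc (A i ∩ W).card ≤ (insert c (A i ∩ W.erase c)).card := by
                apply Finset.card_le_card
                intro y hy
                rcases Finset.mem_inter.1 hy with ⟨hy1, hy2⟩
                by_cases hyc : y = c
                · rw [hyc]; exact Finset.mem_insert_self _ _
                · exact Finset.mem_insert_of_mem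
                    (Finset.mem_inter.2 ⟨hy1, Finset.mem_erase.2 ⟨hyc, hy2⟩⟩)
          _ ≤ (A i ∩ W.erase c).card + 1 := Finset.card_insert_le _ _
      _ = (n:ℝ) := by simp
  have hnpos : (0:ℝ) < (n:ℝ) := by exact_mod_cast hn
  rw [div_le_one hnpos]
  exact hdiff

lemma deltaSeqPAV_ge (k : ℕ) (hk : 0 < k) : (1:ℝ)/k ≤ deltaSeqPAV k :=
  le_csSup (deltaSet_bddAbove k) (unit_mem_deltaSet k hk)

end DeltaFacts
/-- packaging of an abstract election into a `Fin`-indexed one -/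
lemma package {γ ιI : Type*} [Fintype γ] [DecidableEq γ] [DecidableEq ιI] [Fintype ιI]
    (B : ιI → Finset γ) {K : ℕ} (cc : Fin K → γ)
    (hinj : Function.Injective cc)
    (hstep : ∀ (p : Fin K) (c'' : γ),
      mys B (insert c'' ((Finset.univ.filter (fun q : Fin K => (q:ℕ) < (p:ℕ))).image cc)) ≤
      mys B (insert (cc p) ((Finset.univ.filter (fun q : Fin K => (q:ℕ) < (p:ℕ))).image cc)))
    (V0 : Finset ιI) (X0 : Finset γ) (hV0 : V0.Nonempty)
    (hBV : ∀ i ∈ V0, B i = X0) :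
    ∃ (A : Fin (Fintype.card ιI) → Finset (Fin (Fintype.card γ)))
      (W : Finset (Fin (Fintype.card γ))) (V : Finset (Fin (Fintype.card ιI))),
      SeqPAVWins A K W ∧ V.card = V0.card ∧
      ((commonApproved A V).card : ℝ) = (X0.card : ℝ) ∧
      satisf A V W = ((Finset.image cc Finset.univ ∩ X0).card : ℝ) := by
  classical
  refine ⟨fun iv => (B ((Fintype.equivFin ιI).symm iv)).image (Fintype.equivFin γ),
    Finset.image (fun p => Fintype.equivFin γ (cc p)) Finset.univ,
    Finset.image (fun i => Fintype.equivFin ιI i) V0, ?_, ?_, ?_, ?_⟩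
  · exact ⟨fun p => Fintype.equivFin γ (cc p), isSeqPAVRun_transport B cc hinj hstep, rfl⟩
  · exact Finset.card_image_of_injective _ (Fintype.equivFin ιI).injective
  · -- commonApproved
    have hA : ∀ i0 ∈ V0,
        (B ((Fintype.equivFin ιI).symm (Fintype.equivFin ιI i0))).image (Fintype.equivFin γ)
          = X0.image (Fintype.equivFin γ) := by
      intro i0 hi0
      simp only [Equiv.symm_apply_apply]
      rw [hBV i0 hi0]
    have hca : commonApproved
        (fun iv => (B ((Fintype.equivFin ιI).symm iv)).image (Fintype.equivFin γ))
        (Finset.image (fun i => Fintype.equivFin ιI i) V0) =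
        X0.image (Fintype.equivFin γ) := by
      unfold commonApproved
      ext cf
      simp only [Finset.mem_filter, Finset.mem_univ, true_and]
      constructor
      · intro h
        obtain ⟨i0, hi0⟩ := hV0
        have hmem : Fintype.equivFin ιI i0 ∈
            Finset.image (fun i => Fintype.equivFin ιI i) V0 :=
          Finset.mem_image_of_mem _ hi0
        have := h _ hmem
        rwa [hA i0 hi0] at this
      · intro hcf i hi
        rcases Finset.mem_image.1 hi with ⟨i0, hi0, rfl⟩
        rw [hA i0 hi0]
        exact hcf
    rw [hca, Finset.card_image_of_injective _ (Fintype.equivFin γ).injective]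
  · -- satisfaction
    unfold satisf
    rw [Finset.sum_image (fun a _ b _ h => (Fintype.equivFin ιI).injective h)]
    have hterm : ∀ i0 ∈ V0,
        ((Finset.image (fun p => Fintype.equivFin γ (cc p)) Finset.univ ∩
          (B ((Fintype.equivFin ιI).symm (Fintype.equivFin ιI i0))).image
            (Fintype.equivFin γ)).card : ℝ)
        = ((Finset.image cc Finset.univ ∩ X0).card : ℝ) := by
      intro i0 hi0
      simp only [Equiv.symm_apply_apply]
      rw [hBV i0 hi0]
      have h1 : Finset.image (fun p => Fintype.equivFin γ (cc p)) Finset.univ =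
          (Finset.image cc Finset.univ).image (Fintype.equivFin γ) := by
        rw [Finset.image_image]
        rfl
      rw [h1, ← Finset.image_inter _ _ (Fintype.equivFin γ).injective,
        Finset.card_image_of_injective _ (Fintype.equivFin γ).injective]
    rw [Finset.sum_congr rfl hterm, Finset.sum_const,
      Finset.card_image_of_injective _ (Fintype.equivFin ιI).injective, nsmul_eq_mul]
    have hV0card : (0:ℝ) < (V0.card : ℝ) := by
      have := Finset.card_pos.2 hV0
      exact_mod_cast this
    field_simp

set_option maxHeartbeats 2000000 in
theorem seqPAV_proportionality_degree_upper
    (k ℓ : ℕ) (hk : 0 < k) (hℓ : 0 < ℓ) (ε : ℝ) (hε : 0 < ε) :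
    ∃ (n m k' : ℕ) (A : Fin n → Finset (Fin m)) (W : Finset (Fin m)) (V : Finset (Fin n)),
      0 < n ∧ 0 < k' ∧ SeqPAVWins A k' W ∧ LargeGroup k' ℓ V ∧
      (ℓ : ℝ) ≤ ((commonApproved A V).card : ℝ) ∧
      satisf A V W < (ℓ : ℝ) / ((k : ℝ) * deltaSeqPAV k) + ε := by
  classical
  have hkpos : (0:ℝ) < k := by exact_mod_cast hk
  have hlpos : (0:ℝ) < ℓ := by exact_mod_cast hℓ
  set Δ := deltaSeqPAV k with hΔdef
  have hΔk : (1:ℝ)/k ≤ Δ := deltaSeqPAV_ge k hk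
  have hΔpos : 0 < Δ := lt_of_lt_of_le (by positivity) hΔk
  -- step 1 : pick a profile nearly attaining the sup
  obtain ⟨Δ', hΔ'mem, hΔ'k, hΔ'bound⟩ :
      ∃ Δ' ∈ deltaSet k, (1:ℝ)/k ≤ Δ' ∧
        (ℓ:ℝ)/((k:ℝ)*Δ') ≤ (ℓ:ℝ)/((k:ℝ)*Δ) + ε/2 := by
    by_cases hcase : Δ ≤ 1/k
    · have heq : Δ = 1/k := le_antisymm hcase hΔk
      refine ⟨1/k, unit_mem_deltaSet k hk, le_rfl, ?_⟩
      rw [heq]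
      linarith
    · push_neg at hcase
      set c0 := ε*k/(2*ℓ) with hc0
      have hc0pos : 0 < c0 := by positivity
      set δ := min (Δ - 1/k) (c0/(k^2)) with hδ
      have hδpos : 0 < δ := lt_min (by linarith) (by positivity)
      have hlt : Δ - δ < sSup (deltaSet k) := by
        rw [← deltaSeqPAV_eq, ← hΔdef]; linarith
      obtain ⟨Δ', hmem, hgt⟩ := exists_lt_of_lt_csSup (⟨1/k, unit_mem_deltaSet k hk⟩ : (deltaSet k).Nonempty) hlt
      have hΔ'k : (1:ℝ)/k ≤ Δ' := by
        have h1 : δ ≤ Δ - 1/k := min_le_left _ _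
        linarith
      refine ⟨Δ', hmem, hΔ'k, ?_⟩
      have hΔ'pos : 0 < Δ' := lt_of_lt_of_le (by positivity) hΔ'k
      have hkey : (ℓ:ℝ)/((k:ℝ)*Δ') - (ℓ:ℝ)/((k:ℝ)*Δ) = (ℓ:ℝ)*(Δ - Δ')/((k:ℝ)*Δ'*Δ) := by
        field_simp
      have hbound : (ℓ:ℝ)*(Δ - Δ')/((k:ℝ)*Δ'*Δ) ≤ ε/2 := by
        by_cases hsign : Δ - Δ' ≤ 0
        · have hnum : (ℓ:ℝ)*(Δ - Δ') ≤ 0 := mul_nonpos_of_nonneg_of_nonpos (le_of_lt hlpos) hsign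
          have hden : 0 < (k:ℝ)*Δ'*Δ := by positivity
          have := div_nonpos_of_nonpos_of_nonneg hnum (le_of_lt hden)
          linarith
        · push_neg at hsign
          have hnum : (ℓ:ℝ)*(Δ - Δ') ≤ (ℓ:ℝ)*δ :=
            mul_le_mul_of_nonneg_left (by linarith) (le_of_lt hlpos)
          have hden : (1:ℝ)/k ≤ (k:ℝ)*Δ'*Δ := by
            have h1 : (1:ℝ)/k * ((1:ℝ)/k) * k ≤ Δ' * Δ * k := by
              apply mul_le_mul_of_nonneg_right _ (le_of_lt hkpos)
              apply mul_le_mul hΔ'k hΔk (by positivity) (by linarith)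
            calc (1:ℝ)/k = (1:ℝ)/k * ((1:ℝ)/k) * k := by field_simp
            _ ≤ Δ' * Δ * k := h1
            _ = (k:ℝ)*Δ'*Δ := by ring
          calc (ℓ:ℝ)*(Δ - Δ')/((k:ℝ)*Δ'*Δ) ≤ (ℓ:ℝ)*δ/((1:ℝ)/k) := by
                apply div_le_div₀ (by positivity) hnum (by positivity) hden
          _ = (ℓ:ℝ)*δ*k := by field_simp
          _ ≤ (ℓ:ℝ)*(c0/(k^2))*k := by
                have h2 : δ ≤ c0/(k^2) := min_le_right _ _
                apply mul_le_mul_of_nonneg_right _ (le_of_lt hkpos)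
                exact mul_le_mul_of_nonneg_left h2 (le_of_lt hlpos)
          _ = (ℓ:ℝ)*c0/k := by field_simp
          _ = ε/2 := by rw [hc0]; field_simp
      linarith
  have hΔ'pos : 0 < Δ' := lt_of_lt_of_le (by positivity) hΔ'k
  obtain ⟨n₀, m₀, A₀, cand₀, hk₀, hn₀, hrun₀, hΔ'eq⟩ := hΔ'mem
  have hG : GoodRun A₀ cand₀ := GoodRun.of_isSeqPAVRun hrun₀
  have hn₀pos : (0:ℝ) < n₀ := by exact_mod_cast hn₀
  have hgg₀ : gg A₀ cand₀ (k-1) = (n₀:ℝ) * Δ' := by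
    have := runLastDelta_eq_gg hG.1 hk₀ (A := A₀)
    rw [this] at hΔ'eq
    field_simp at hΔ'eq
    linarith
  -- step 2 : trim
  set A₁ := trimP A₀ cand₀ with hA₁
  have hG₁ : GoodRun A₁ cand₀ := hG.trim
  have hgg₁ : gg A₁ cand₀ (k-1) = (n₀:ℝ) * Δ' := by
    rw [hA₁, gg_trim]; exact hgg₀
  have htrim₁ : ∀ w, A₁ w ⊆ Finset.image cand₀ Finset.univ := trimP_subset A₀ cand₀
  -- step 3 : the number of seats for the large group
  set s := Nat.floor ((ℓ:ℝ)/((k:ℝ)*Δ')) with hsdef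
  have hs_le : (s:ℝ) ≤ (ℓ:ℝ)/((k:ℝ)*Δ') := Nat.floor_le (by positivity)
  have hs_lt : (ℓ:ℝ)/((k:ℝ)*Δ') < (s:ℝ) + 1 := Nat.lt_floor_add_one _
  have hkd1 : (1:ℝ) ≤ (k:ℝ)*Δ' := by
    calc (1:ℝ) = k * (1/k) := by field_simp
    _ ≤ k * Δ' := mul_le_mul_of_nonneg_left hΔ'k (le_of_lt hkpos)
  have hsl : s ≤ ℓ := by
    have h1 : (ℓ:ℝ)/((k:ℝ)*Δ') ≤ (ℓ:ℝ) := div_le_self (by positivity) hkd1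
    have h2 : (s:ℝ) ≤ (ℓ:ℝ) := le_trans hs_le h1
    exact_mod_cast h2
  set u := ((s:ℝ)+1) * Δ' with hu
  have hupos : 0 < u := by positivity
  have huk : (ℓ:ℝ) < u * k := by
    rw [div_lt_iff₀ (by positivity)] at hs_lt
    have he : ((s:ℝ)+1)*((k:ℝ)*Δ') = (((s:ℝ)+1)*Δ')*(k:ℝ) := by ring
    rw [hu]
    linarith
  -- step 4 : choose the duplication factor c
  obtain ⟨c, hc⟩ := exists_nat_ge
    (max (((k:ℝ)+1)/((n₀:ℝ)*(u*k-ℓ))) (1/((n₀:ℝ)*Δ')))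
  have hca : ((k:ℝ)+1)/((n₀:ℝ)*(u*k-ℓ)) ≤ c := le_trans (le_max_left _ _) hc
  have hcb : 1/((n₀:ℝ)*Δ') ≤ c := le_trans (le_max_right _ _) hc
  have hcpos : (0:ℝ) < c := lt_of_lt_of_le (by positivity) hcb
  have hcnat : 0 < c := by exact_mod_cast hcpos
  set Nh := (c:ℝ) * (n₀:ℝ) with hNh
  have hNhpos : 0 < Nh := by positivity
  have hF3 : (k:ℝ)+1 ≤ Nh * (u*k-ℓ) := by
    have hpos : (0:ℝ) < (n₀:ℝ)*(u*k-ℓ) := mul_pos hn₀pos (by linarith)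
    rw [div_le_iff₀ hpos] at hca
    have he : (c:ℝ)*((n₀:ℝ)*(u*(k:ℝ)-(ℓ:ℝ))) = ((c:ℝ)*(n₀:ℝ))*(u*(k:ℝ)-(ℓ:ℝ)) := by ring
    rw [hNh]
    linarith
  have hF0 : 1 ≤ Nh * Δ' := by
    rw [div_le_iff₀ (by positivity)] at hcb
    have he : (c:ℝ)*((n₀:ℝ)*Δ') = ((c:ℝ)*(n₀:ℝ))*Δ' := by ring
    rw [hNh]
    linarith
  -- step 5 : duplicated profile
  set A₂ := dupP c A₁ with hA₂
  have hG₂ : GoodRun A₂ cand₀ := hG₁.dup c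
  have htrim₂ : ∀ w, A₂ w ⊆ Finset.image cand₀ Finset.univ := fun w => htrim₁ w.2
  have hGhat : gg A₂ cand₀ (k-1) = Nh * Δ' := by
    rw [hA₂, gg_dup, hgg₁, hNh]; ring
  have hcard2 : (Fintype.card (Fin c × Fin n₀) : ℝ) = Nh := by
    rw [hNh]; simp
  -- step 6 : choose v and t
  set v := Nat.floor (((s:ℝ)+1) * (Nh * Δ')) with hvdef
  have hv_le : (v:ℝ) ≤ ((s:ℝ)+1) * (Nh * Δ') := Nat.floor_le (by positivity)
  have hv_gt : ((s:ℝ)+1) * (Nh * Δ') - 1 < (v:ℝ) := Nat.sub_one_lt_floor _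
  have hv1 : 1 ≤ v := by
    have h0 : Nh * Δ' ≤ ((s:ℝ)+1) * (Nh * Δ') := by
      have hs0 : (0:ℝ) ≤ (s:ℝ) := Nat.cast_nonneg s
      have hx : (0:ℝ) ≤ Nh * Δ' := by positivity
      nlinarith
    have h1 : (1:ℝ) ≤ ((s:ℝ)+1) * (Nh * Δ') := le_trans hF0 h0
    exact Nat.le_floor (by exact_mod_cast h1)
  have hvpos : (0:ℝ) < v := by
    have : (1:ℝ) ≤ (v:ℝ) := by exact_mod_cast hv1
    linarith
  obtain ⟨t, ht2⟩ := exists_nat_ge ((ℓ:ℝ)*Nh*(u+(s:ℝ)) + (s:ℝ) + 1)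
  have htpos : 0 < t := by
    have h0 : (0:ℝ) ≤ (ℓ:ℝ)*Nh*(u+(s:ℝ)) := by positivity
    have h1 : (1:ℝ) ≤ (t:ℝ) := by
      have h2 : (0:ℝ) ≤ (s:ℝ) := Nat.cast_nonneg s
      linarith
    exact_mod_cast lt_of_lt_of_le zero_lt_one (by exact_mod_cast h1)
  set K := s + t*k with hK
  have hKpos : 0 < K := by
    have := Nat.mul_pos htpos hk
    omega
  -- step 7 : the composite election
  have hvle2 : (v:ℝ) ≤ ((s:ℝ)+1) * gg A₂ cand₀ (k-1) := by rw [hGhat]; exact hv_le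
  set B := Bc A₂ t v hsl with hB
  set cc := ccand cand₀ htpos hsl with hcc
  have hccinj : Function.Injective cc := ccand_inj cand₀ hG₂.1 htpos hsl
  have hstep : ∀ (p : Fin K) (c'' : (Fin t × Fin m₀) ⊕ Fin ℓ),
      mys B (insert c'' ((Finset.univ.filter (fun q : Fin K => (q:ℕ) < (p:ℕ))).image cc)) ≤
      mys B (insert (cc p) ((Finset.univ.filter (fun q : Fin K => (q:ℕ) < (p:ℕ))).image cc)) :=
    fun p c'' => main_step A₂ cand₀ hG₂ htrim₂ hk htpos hsl hvle2 p c''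
  -- the large group (the `v` middle voters) and their common candidates
  set V0 := Finset.image
      (fun x : Fin v => (Sum.inr (Sum.inl x) :
        (Fin t × (Fin c × Fin n₀)) ⊕ (Fin v ⊕ (Fin s × (Fin c × Fin n₀))))) Finset.univ with hV0
  set X0 := Finset.image (Sum.inr : Fin ℓ → (Fin t × Fin m₀) ⊕ Fin ℓ) Finset.univ with hX0
  have hV0ne : V0.Nonempty := by
    rw [hV0]
    exact ⟨_, Finset.mem_image_of_mem _ (Finset.mem_univ (⟨0, hv1⟩ : Fin v))⟩
  have hBV : ∀ i ∈ V0, B i = X0 := by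
    intro i hi
    rw [hV0] at hi
    rcases Finset.mem_image.1 hi with ⟨x, _, rfl⟩
    rw [hB, hX0]
    rfl
  obtain ⟨A_fin, W_fin, V_fin, hwins, hcardV, hCAcard, hsatisf⟩ :=
    package B cc hccinj hstep V0 X0 hV0ne hBV
  have hV0card : V0.card = v := by
    rw [hV0, Finset.card_image_of_injective, Finset.card_univ, Fintype.card_fin]
    intro a b hab
    exact Sum.inl_injective (Sum.inr_injective hab)
  have hX0card : X0.card = ℓ := by
    rw [hX0, Finset.card_image_of_injective _ Sum.inr_injective, Finset.card_univ,
      Fintype.card_fin]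
  -- the group gets exactly `s` of its candidates
  have hW'' : Finset.image cc Finset.univ = SpN cand₀ htpos hsl K :=
    (SpN_full cand₀ htpos hsl).symm
  have hxcntW : xcnt (Finset.image cc Finset.univ) = s := by
    rw [hW'']
    rw [hK] at *
    rw [xcnt_SpN htpos hsl]
    omega
  have hsatval : ((Finset.image cc Finset.univ ∩ X0).card : ℝ) = (s:ℝ) := by
    rw [Finset.inter_comm, hX0, card_image_inr_inter, hxcntW]
  -- the electorate size
  have hn''eq : ((Fintype.card ((Fin t × (Fin c × Fin n₀)) ⊕
      (Fin v ⊕ (Fin s × (Fin c × Fin n₀))))) : ℝ) = (t:ℝ)*Nh + (v:ℝ) + (s:ℝ)*Nh := by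
    simp only [Fintype.card_sum, Fintype.card_prod, Fintype.card_fin]
    push_cast
    rw [hNh]
    ring
  -- the large-group inequality
  have hLG : (ℓ:ℝ) * ((t:ℝ)*Nh + (v:ℝ) + (s:ℝ)*Nh) ≤ (v:ℝ) * (K:ℝ) := by
    have hKr : (K:ℝ) = (s:ℝ) + (t:ℝ)*(k:ℝ) := by rw [hK]; push_cast; ring
    rw [hKr]
    have htk0 : (0:ℝ) ≤ (t:ℝ)*(k:ℝ) := by positivity
    have hPe : u*Nh = ((s:ℝ)+1)*(Nh*Δ') := by rw [hu]; ring
    have hA1 : (u*Nh - 1) * ((t:ℝ)*(k:ℝ)) ≤ (v:ℝ) * ((t:ℝ)*(k:ℝ)) := by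
      apply mul_le_mul_of_nonneg_right _ htk0
      linarith [hv_gt, hPe]
    have hA2 : ((Nh*(ℓ:ℝ) + ((k:ℝ)+1))) * (t:ℝ) ≤ (u*Nh*(k:ℝ)) * (t:ℝ) := by
      apply mul_le_mul_of_nonneg_right _ (by positivity)
      have he : Nh*(u*(k:ℝ)-(ℓ:ℝ)) = u*Nh*(k:ℝ) - Nh*(ℓ:ℝ) := by ring
      linarith [hF3]
    have hA3 : (ℓ:ℝ)*(v:ℝ) ≤ (ℓ:ℝ)*(u*Nh) := by
      apply mul_le_mul_of_nonneg_left _ (le_of_lt hlpos)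
      linarith [hv_le, hPe]
    have hA4 : (0:ℝ) ≤ (v:ℝ)*(s:ℝ) := by positivity
    have hE1 : (v:ℝ) * ((s:ℝ) + (t:ℝ)*(k:ℝ)) = (v:ℝ)*(s:ℝ) + (v:ℝ)*((t:ℝ)*(k:ℝ)) := by ring
    have hE2 : (u*Nh - 1) * ((t:ℝ)*(k:ℝ)) = (u*Nh*(k:ℝ))*(t:ℝ) - (t:ℝ)*(k:ℝ) := by ring
    have hE3 : ((Nh*(ℓ:ℝ) + ((k:ℝ)+1))) * (t:ℝ)
        = (ℓ:ℝ)*((t:ℝ)*Nh) + (t:ℝ)*(k:ℝ) + (t:ℝ) := by ring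
    have hE4 : (ℓ:ℝ) * ((t:ℝ)*Nh + (v:ℝ) + (s:ℝ)*Nh)
        = (ℓ:ℝ)*((t:ℝ)*Nh) + (ℓ:ℝ)*(v:ℝ) + (ℓ:ℝ)*((s:ℝ)*Nh) := by ring
    have hE5 : (ℓ:ℝ)*Nh*(u+(s:ℝ)) = (ℓ:ℝ)*(u*Nh) + (ℓ:ℝ)*((s:ℝ)*Nh) := by ring
    linarith [ht2, hA1, hA2, hA3, hA4, hE1, hE2, hE3, hE4, hE5]
  -- assemble everything
  refine ⟨_, _, K, A_fin, W_fin, V_fin, ?_, hKpos, hwins, ?_, ?_, ?_⟩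
  · have : Nonempty ((Fin t × (Fin c × Fin n₀)) ⊕ (Fin v ⊕ (Fin s × (Fin c × Fin n₀)))) :=
      ⟨Sum.inr (Sum.inl ⟨0, hv1⟩)⟩
    exact Fintype.card_pos
  · unfold LargeGroup
    rw [hcardV, hV0card]
    rw [div_le_iff₀ (by exact_mod_cast hKpos)]
    rw [hn''eq]
    exact hLG
  · rw [hCAcard, hX0card]
  · rw [hsatisf, hsatval]
    calc (s:ℝ) ≤ (ℓ:ℝ)/((k:ℝ)*Δ') := hs_le
    _ ≤ (ℓ:ℝ)/((k:ℝ)*Δ) + ε/2 := hΔ'bound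
    _ < (ℓ:ℝ)/((k:ℝ)*Δ) + ε := by linarith
end

section
/- Let λ : ℝ → ℝ₊ be a non-increasing, convex, positive function and let ℓ ≤ k be positive integers. Then there exists exactly one real number x ≤ k satisfying (k − x)·λ(1 + x) = ((k − ℓ)/ℓ)·max_{j∈{1,…,k}} j·λ(j); in particular, on the interval (−∞, k] the left-hand side is a strictly decreasing continuous function of x that is 0 at x = k, so the defining equation of the proportionality guarantee for λ-Thiele rules has a unique solution for each ℓ and k. -/
open Finset

noncomputable def thieleScore (lam : ℝ → ℝ) {C : Type*} [DecidableEq C] {n : ℕ}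
    (A : Fin n → Finset C) (W : Finset C) : ℝ :=
  ∑ i, ∑ j ∈ Finset.range ((A i ∩ W).card), lam ((j : ℝ) + 1)

/-- The λ-Thiele rule: winning committees are the size-`k` committees of maximal λ-score. -/
def ThieleWins (lam : ℝ → ℝ) {C : Type*} [DecidableEq C] {n : ℕ}
    (A : Fin n → Finset C) (k : ℕ) (W : Finset C) : Prop :=
  W.card = k ∧ ∀ W' : Finset C, W'.card = k → thieleScore lam A W' ≤ thieleScore lam A W

/-- `max_{x ∈ {1,…,k}} x·λ(x)`. -/
noncomputable def maxXLam (lam : ℝ → ℝ) (k : ℕ) : ℝ :=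
  ⨆ x : Fin k, (((x : ℕ) : ℝ) + 1) * lam (((x : ℕ) : ℝ) + 1)

section SubMulComp

variable {lam : ℝ → ℝ}

theorem strictAntiOn_sub_mul_comp_add (hpos : ∀ x, 0 < lam x) (hanti : Antitone lam)
    (a b : ℝ) : StrictAntiOn (fun x => (a - x) * lam (b + x)) (Set.Iic a) := by
  intro x _ y hy hxy
  calc (a - y) * lam (b + y) ≤ (a - y) * lam (b + x) :=
        mul_le_mul_of_nonneg_left (hanti (by linarith)) (sub_nonneg.mpr hy)
    _ < (a - x) * lam (b + x) := mul_lt_mul_of_pos_right (by linarith) (hpos _)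

/-- The value is `0` at `a` and already `≥ c` at `a - c / lam (b + a)`, since `lam` is
antitone; the intermediate value theorem does the rest. -/
theorem exists_le_sub_mul_comp_add_eq (hpos : ∀ x, 0 < lam x) (hanti : Antitone lam)
    (hcont : Continuous lam) (a b : ℝ) {c : ℝ} (hc : 0 ≤ c) :
    ∃ x ≤ a, (a - x) * lam (b + x) = c := by
  set d := c / lam (b + a)
  have hd : 0 ≤ d := div_nonneg hc (hpos _).le
  have hx₀ : c ≤ (a - (a - d)) * lam (b + (a - d)) :=
    calc c = d * lam (b + a) := (div_mul_cancel₀ _ (hpos _).ne').symm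
      _ ≤ (a - (a - d)) * lam (b + (a - d)) := by
        rw [sub_sub_cancel]
        exact mul_le_mul_of_nonneg_left (hanti (by linarith)) hd
  obtain ⟨x, hx, hxc⟩ := intermediate_value_Icc' (sub_le_self a hd)
    (f := fun x => (a - x) * lam (b + x)) (by fun_prop) ⟨by simpa using hc, hx₀⟩
  exact ⟨x, hx.2, hxc⟩

end SubMulComp

theorem maxXLam_nonneg {lam : ℝ → ℝ} (hnonneg : ∀ x, 0 ≤ lam x) (k : ℕ) :
    0 ≤ maxXLam lam k :=
  Real.iSup_nonneg fun _ => mul_nonneg (by positivity) (hnonneg _)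

theorem thiele_guarantee_equation_unique_solution_general
    (lam : ℝ → ℝ) (hpos : ∀ x : ℝ, 0 < lam x)
    (hanti : Antitone lam) (hconv : ConvexOn ℝ Set.univ lam)
    (ℓ k : ℕ) (hℓk : ℓ ≤ k) :
    (∃! x : ℝ, x ≤ (k : ℝ) ∧
      ((k : ℝ) - x) * lam (1 + x) = (((k : ℝ) - (ℓ : ℝ)) / (ℓ : ℝ)) * maxXLam lam k) ∧
    StrictAntiOn (fun x : ℝ => ((k : ℝ) - x) * lam (1 + x)) (Set.Iic (k : ℝ)) ∧
    ContinuousOn (fun x : ℝ => ((k : ℝ) - x) * lam (1 + x)) (Set.Iic (k : ℝ)) ∧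
    ((k : ℝ) - (k : ℝ)) * lam (1 + (k : ℝ)) = 0 := by
  have hcont : Continuous lam := continuousOn_univ.mp (hconv.continuousOn isOpen_univ)
  have hstrict := strictAntiOn_sub_mul_comp_add hpos hanti (k : ℝ) 1
  have hrhs : 0 ≤ (((k : ℝ) - ℓ) / ℓ) * maxXLam lam k :=
    mul_nonneg (div_nonneg (sub_nonneg.mpr (Nat.cast_le.mpr hℓk)) ℓ.cast_nonneg)
      (maxXLam_nonneg (fun x => (hpos x).le) k)
  obtain ⟨x, hxk, hx⟩ := exists_le_sub_mul_comp_add_eq hpos hanti hcont (k : ℝ) 1 hrhs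
  refine ⟨⟨x, ⟨hxk, hx⟩, fun y ⟨hyk, hy⟩ => hstrict.injOn hyk hxk (hy.trans hx.symm)⟩,
    hstrict, Continuous.continuousOn (by fun_prop), by simp⟩

theorem thiele_guarantee_equation_unique_solution
    (lam : ℝ → ℝ) (hpos : ∀ x : ℝ, 0 < lam x)
    (hanti : Antitone lam) (hconv : ConvexOn ℝ Set.univ lam)
    (ℓ k : ℕ) (hℓ : 0 < ℓ) (hℓk : ℓ ≤ k) :
    (∃! x : ℝ, x ≤ (k : ℝ) ∧
      ((k : ℝ) - x) * lam (1 + x) = (((k : ℝ) - (ℓ : ℝ)) / (ℓ : ℝ)) * maxXLam lam k) ∧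
    StrictAntiOn (fun x : ℝ => ((k : ℝ) - x) * lam (1 + x)) (Set.Iic (k : ℝ)) ∧
    ContinuousOn (fun x : ℝ => ((k : ℝ) - x) * lam (1 + x)) (Set.Iic (k : ℝ)) ∧
    ((k : ℝ) - (k : ℝ)) * lam (1 + (k : ℝ)) = 0 :=
  thiele_guarantee_equation_unique_solution_general lam hpos hanti hconv ℓ k hℓk
end

section
/- Let λ : ℝ → ℝ₊ be a non-increasing, convex, positive function and let k be a committee size. Let α > 0 satisfy α·λ(1) = λ(1 + k·α). Then for every approval-based election (N, C, A) and every size-k committee W winning under the λ-Thiele rule, the approval score of W is at least (α/(1+α)) times the maximum approval score of any size-k committee; moreover α/(1+α) > α − α². -/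
open Finset

noncomputable def approvalScore {C : Type*} [DecidableEq C] {n : ℕ}
    (A : Fin n → Finset C) (W : Finset C) : ℝ :=
  ∑ i, ((A i ∩ W).card : ℝ)

lemma thiele_insert (lam : ℝ → ℝ) {C : Type*} [DecidableEq C] {n : ℕ}
    (A : Fin n → Finset C) (X : Finset C) (c : C) (hc : c ∉ X) :
    thieleScore lam A (insert c X) =
      thieleScore lam A X +
        ∑ i, (if c ∈ A i then lam (((A i ∩ X).card : ℝ) + 1) else 0) := by
  unfold thieleScore
  rw [← Finset.sum_add_distrib]
  refine Finset.sum_congr rfl fun i _ => ?_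
  by_cases h : c ∈ A i
  · have hint : A i ∩ insert c X = insert c (A i ∩ X) :=
      Finset.inter_insert_of_mem h
    have hcn : c ∉ A i ∩ X := fun hx => hc (Finset.mem_inter.1 hx).2
    rw [hint, Finset.card_insert_of_notMem hcn, Finset.sum_range_succ, if_pos h]
  · have hint : A i ∩ insert c X = A i ∩ X :=
      Finset.inter_insert_of_notMem h
    rw [hint, if_neg h, add_zero]

lemma thiele_exchange (lam : ℝ → ℝ) (hanti : Antitone lam)
    {C : Type*} [DecidableEq C] {n : ℕ} (A : Fin n → Finset C) (k : ℕ)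
    (W : Finset C) (hW : ThieleWins lam A k W)
    (c : C) (hc : c ∉ W) (d : C) (hd : d ∈ W) :
    (∑ i, if c ∈ A i then lam (((A i ∩ W).card : ℝ) + 1) else 0) ≤
      ∑ i, if d ∈ A i then lam ((A i ∩ W).card : ℝ) else 0 := by
  set X := W.erase d with hX
  have hXW : X ⊆ W := Finset.erase_subset d W
  have hcX : c ∉ X := fun h => hc (hXW h)
  have hdX : d ∉ X := Finset.notMem_erase d W
  have hWX : insert d X = W := Finset.insert_erase hd
  have hk1 : 1 ≤ k := hW.1 ▸ Finset.card_pos.2 ⟨d, hd⟩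
  have hcard : (insert c X).card = k := by
    rw [Finset.card_insert_of_notMem hcX, hX, Finset.card_erase_of_mem hd, hW.1]
    omega
  have h1 := hW.2 (insert c X) hcard
  have hc' := thiele_insert lam A X c hcX
  have hd' := thiele_insert lam A X d hdX
  rw [hWX] at hd'
  rw [hc', hd'] at h1
  have key : (∑ i, if c ∈ A i then lam (((A i ∩ X).card : ℝ) + 1) else 0) ≤
      ∑ i, if d ∈ A i then lam (((A i ∩ X).card : ℝ) + 1) else 0 := by linarith
  have left : (∑ i, if c ∈ A i then lam (((A i ∩ W).card : ℝ) + 1) else 0) ≤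
      ∑ i, if c ∈ A i then lam (((A i ∩ X).card : ℝ) + 1) else 0 := by
    refine Finset.sum_le_sum fun i _ => ?_
    by_cases h : c ∈ A i
    · simp only [if_pos h]
      refine hanti ?_
      have : (A i ∩ X).card ≤ (A i ∩ W).card :=
        Finset.card_le_card (Finset.inter_subset_inter (Finset.Subset.refl _) hXW)
      have := (Nat.cast_le (α := ℝ)).2 this
      linarith
    · simp [h]
  have right : (∑ i, if d ∈ A i then lam (((A i ∩ X).card : ℝ) + 1) else 0) =
      ∑ i, if d ∈ A i then lam ((A i ∩ W).card : ℝ) else 0 := by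
    refine Finset.sum_congr rfl fun i _ => ?_
    by_cases h : d ∈ A i
    · simp only [if_pos h]
      have hint : A i ∩ W = insert d (A i ∩ X) := by
        rw [← hWX, Finset.inter_insert_of_mem h]
      have hdn : d ∉ A i ∩ X := fun hx => hdX (Finset.mem_inter.1 hx).2
      rw [hint, Finset.card_insert_of_notMem hdn]
      push_cast
      ring_nf
    · simp [h]
  calc (∑ i, if c ∈ A i then lam (((A i ∩ W).card : ℝ) + 1) else 0)
      ≤ ∑ i, if c ∈ A i then lam (((A i ∩ X).card : ℝ) + 1) else 0 := left
    _ ≤ ∑ i, if d ∈ A i then lam (((A i ∩ X).card : ℝ) + 1) else 0 := key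
    _ = ∑ i, if d ∈ A i then lam ((A i ∩ W).card : ℝ) else 0 := right

lemma thiele_swap_sum (lam : ℝ → ℝ) (hanti : Antitone lam)
    {C : Type*} [DecidableEq C] {n : ℕ} (A : Fin n → Finset C) (k : ℕ)
    (W : Finset C) (hW : ThieleWins lam A k W)
    (c : C) (hc : c ∉ W) :
    (k : ℝ) * (∑ i, if c ∈ A i then lam (((A i ∩ W).card : ℝ) + 1) else 0) ≤
      lam 1 * approvalScore A W := by
  have step1 : (k : ℝ) * (∑ i, if c ∈ A i then lam (((A i ∩ W).card : ℝ) + 1) else 0) ≤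
      ∑ d ∈ W, ∑ i, (if d ∈ A i then lam ((A i ∩ W).card : ℝ) else 0) := by
    have : (k : ℝ) * (∑ i, if c ∈ A i then lam (((A i ∩ W).card : ℝ) + 1) else 0) =
        ∑ _d ∈ W, ∑ i, (if c ∈ A i then lam (((A i ∩ W).card : ℝ) + 1) else 0) := by
      rw [Finset.sum_const, hW.1, nsmul_eq_mul]
    rw [this]
    exact Finset.sum_le_sum fun d hd => thiele_exchange lam hanti A k W hW c hc d hd
  have step2 : (∑ d ∈ W, ∑ i, (if d ∈ A i then lam ((A i ∩ W).card : ℝ) else 0)) =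
      ∑ i, ((A i ∩ W).card : ℝ) * lam ((A i ∩ W).card : ℝ) := by
    rw [Finset.sum_comm]
    refine Finset.sum_congr rfl fun i _ => ?_
    rw [Finset.sum_ite_mem, Finset.sum_const, nsmul_eq_mul, Finset.inter_comm]
  have step3 : (∑ i, ((A i ∩ W).card : ℝ) * lam ((A i ∩ W).card : ℝ)) ≤
      lam 1 * approvalScore A W := by
    unfold approvalScore
    rw [Finset.mul_sum]
    refine Finset.sum_le_sum fun i _ => ?_
    rcases Nat.eq_zero_or_pos (A i ∩ W).card with h | h
    · simp [h]
    · rw [mul_comm (lam 1)]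
      refine mul_le_mul_of_nonneg_left (hanti ?_) (Nat.cast_nonneg _)
      exact_mod_cast h
  calc _ ≤ _ := step1
    _ = _ := step2
    _ ≤ _ := step3

lemma candidate_bound (lam : ℝ → ℝ) (hpos : ∀ x : ℝ, 0 < lam x)
    (hanti : Antitone lam) (hconv : ConvexOn ℝ Set.univ lam)
    (k : ℕ) (hk : 0 < k) (α : ℝ) (hα : 0 < α)
    (heq : α * lam 1 = lam (1 + (k : ℝ) * α))
    {C : Type*} [DecidableEq C] {n : ℕ} (A : Fin n → Finset C)
    (W : Finset C) (hW : ThieleWins lam A k W)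
    (c : C) (hc : c ∉ W) :
    α * lam 1 * ((Finset.univ.filter fun i => c ∈ A i).card : ℝ) * k ≤
      lam 1 * approvalScore A W := by
  have hU0 : 0 ≤ approvalScore A W :=
    Finset.sum_nonneg fun i _ => Nat.cast_nonneg _
  have hlam1 : 0 < lam 1 := hpos 1
  set N : Finset (Fin n) := Finset.univ.filter fun i => c ∈ A i with hN
  rcases Nat.eq_zero_or_pos N.card with hm0 | hm0
  · rw [hm0]
    simp only [Nat.cast_zero, mul_zero, zero_mul]
    positivity
  set m : ℝ := (N.card : ℝ) with hm
  have hmpos : (0:ℝ) < m := by rw [hm]; exact_mod_cast hm0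
  set s : ℝ := ∑ i ∈ N, ((A i ∩ W).card : ℝ) with hs
  have hsU : s ≤ approvalScore A W := by
    refine Finset.sum_le_sum_of_subset_of_nonneg (Finset.filter_subset _ _)
      fun i _ _ => Nat.cast_nonneg _
  by_cases hcase : s ≤ (k : ℝ) * α * m
  · -- Jensen case
    have hJ := hconv.map_sum_le (t := N) (w := fun _ => m⁻¹)
      (p := fun i => ((A i ∩ W).card : ℝ) + 1)
      (fun i _ => by positivity)
      (by rw [Finset.sum_const, nsmul_eq_mul, ← hm, mul_inv_cancel₀ hmpos.ne'])
      (fun i _ => Set.mem_univ _)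
    have hpt : (∑ i ∈ N, m⁻¹ • (((A i ∩ W).card : ℝ) + 1)) = m⁻¹ * (s + m) := by
      simp only [smul_eq_mul]
      rw [← Finset.mul_sum, Finset.sum_add_distrib, ← hs, Finset.sum_const,
        nsmul_eq_mul, mul_one, ← hm]
    have hle : m⁻¹ * (s + m) ≤ 1 + (k : ℝ) * α := by
      rw [inv_mul_le_iff₀ hmpos]
      calc s + m ≤ (k : ℝ) * α * m + m := by linarith
        _ = m * (1 + (k : ℝ) * α) := by ring
    have h2 : α * lam 1 * m ≤ ∑ i ∈ N, lam (((A i ∩ W).card : ℝ) + 1) := by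
      have ha : α * lam 1 ≤ lam (m⁻¹ * (s + m)) := by
        rw [heq]; exact hanti hle
      have hb : lam (m⁻¹ * (s + m)) ≤ m⁻¹ * ∑ i ∈ N, lam (((A i ∩ W).card : ℝ) + 1) := by
        rw [hpt] at hJ
        simpa [smul_eq_mul, Finset.mul_sum] using hJ
      have := ha.trans hb
      calc α * lam 1 * m ≤ (m⁻¹ * ∑ i ∈ N, lam (((A i ∩ W).card : ℝ) + 1)) * m :=
            mul_le_mul_of_nonneg_right this hmpos.le
        _ = _ := by field_simp
    have hg : (∑ i ∈ N, lam (((A i ∩ W).card : ℝ) + 1)) =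
        ∑ i, if c ∈ A i then lam (((A i ∩ W).card : ℝ) + 1) else 0 := by
      rw [hN, Finset.sum_filter]
    have h3 := thiele_swap_sum lam hanti A k W hW c hc
    have hkpos : (0:ℝ) < (k:ℝ) := by exact_mod_cast hk
    calc α * lam 1 * m * k = (k:ℝ) * (α * lam 1 * m) := by ring
      _ ≤ (k:ℝ) * (∑ i, if c ∈ A i then lam (((A i ∩ W).card : ℝ) + 1) else 0) := by
          refine mul_le_mul_of_nonneg_left ?_ hkpos.le
          rw [← hg]; exact h2
      _ ≤ lam 1 * approvalScore A W := h3
  · push_neg at hcase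
    calc α * lam 1 * m * k = lam 1 * ((k:ℝ) * α * m) := by ring
      _ ≤ lam 1 * s := mul_le_mul_of_nonneg_left hcase.le hlam1.le
      _ ≤ lam 1 * approvalScore A W := mul_le_mul_of_nonneg_left hsU hlam1.le

theorem thiele_utilitarian_efficiency
    (lam : ℝ → ℝ) (hpos : ∀ x : ℝ, 0 < lam x)
    (hanti : Antitone lam) (hconv : ConvexOn ℝ Set.univ lam)
    (k : ℕ) (hk : 0 < k) (α : ℝ) (hα : 0 < α)
    (heq : α * lam 1 = lam (1 + (k : ℝ) * α))
    {C : Type*} [Fintype C] [DecidableEq C] {n : ℕ} (A : Fin n → Finset C)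
    (W : Finset C) (hW : ThieleWins lam A k W) :
    (∀ W' : Finset C, W'.card = k →
      (α / (1 + α)) * approvalScore A W' ≤ approvalScore A W) ∧
    α - α ^ 2 < α / (1 + α) := by

  have h1α : (0:ℝ) < 1 + α := by linarith
  constructor
  · intro W' hW'
    have hlam1 : 0 < lam 1 := hpos 1
    have hU0 : 0 ≤ approvalScore A W :=
      Finset.sum_nonneg fun i _ => Nat.cast_nonneg _
    set S : ℝ := ∑ c ∈ W' \ W, ((Finset.univ.filter fun i => c ∈ A i).card : ℝ) with hS
    -- approvalScore A W' ≤ approvalScore A W + S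
    have hva : approvalScore A W' ≤ approvalScore A W + S := by
      have hperi : ∀ i, ((A i ∩ W').card : ℝ) ≤
          ((A i ∩ W).card : ℝ) + ((A i ∩ (W' \ W)).card : ℝ) := by
        intro i
        have h1 : (A i ∩ W').card ≤ (A i ∩ W).card + (A i ∩ (W' \ W)).card := by
          calc (A i ∩ W').card ≤ ((A i ∩ W) ∪ (A i ∩ (W' \ W))).card := by
                refine Finset.card_le_card ?_
                intro x hx
                rcases Finset.mem_inter.1 hx with ⟨hxa, hxw⟩
                by_cases hxW : x ∈ W
                · exact Finset.mem_union_left _ (Finset.mem_inter.2 ⟨hxa, hxW⟩)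
                · exact Finset.mem_union_right _
                    (Finset.mem_inter.2 ⟨hxa, Finset.mem_sdiff.2 ⟨hxw, hxW⟩⟩)
            _ ≤ _ := Finset.card_union_le _ _
        exact_mod_cast h1
      have hswap : (∑ i, ((A i ∩ (W' \ W)).card : ℝ)) = S := by
        have e1 : ∀ i, ((A i ∩ (W' \ W)).card : ℝ) =
            ∑ c ∈ W' \ W, (if c ∈ A i then (1:ℝ) else 0) := by
          intro i
          rw [Finset.sum_ite_mem, Finset.sum_const, nsmul_eq_mul, mul_one,
            Finset.inter_comm]
        have e2 : ∀ c : C, ((Finset.univ.filter fun i => c ∈ A i).card : ℝ) =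
            ∑ i, (if c ∈ A i then (1:ℝ) else 0) := by
          intro c
          rw [Finset.sum_boole]
        rw [hS]
        calc (∑ i, ((A i ∩ (W' \ W)).card : ℝ))
            = ∑ i, ∑ c ∈ W' \ W, (if c ∈ A i then (1:ℝ) else 0) :=
              Finset.sum_congr rfl fun i _ => e1 i
          _ = ∑ c ∈ W' \ W, ∑ i, (if c ∈ A i then (1:ℝ) else 0) := Finset.sum_comm
          _ = ∑ c ∈ W' \ W, ((Finset.univ.filter fun i => c ∈ A i).card : ℝ) :=
              Finset.sum_congr rfl fun c _ => (e2 c).symm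
      calc approvalScore A W' ≤ ∑ i, (((A i ∩ W).card : ℝ) + ((A i ∩ (W' \ W)).card : ℝ)) :=
            Finset.sum_le_sum fun i _ => hperi i
        _ = approvalScore A W + ∑ i, ((A i ∩ (W' \ W)).card : ℝ) := by
            rw [Finset.sum_add_distrib]; rfl
        _ = approvalScore A W + S := by rw [hswap]
    -- α * S ≤ approvalScore A W
    have hαS : α * S ≤ approvalScore A W := by
      have hsum : ∑ c ∈ W' \ W,
          (α * lam 1 * ((Finset.univ.filter fun i => c ∈ A i).card : ℝ) * k) ≤
          ∑ _c ∈ W' \ W, lam 1 * approvalScore A W := by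
        refine Finset.sum_le_sum fun c hcmem => ?_
        exact candidate_bound lam hpos hanti hconv k hk α hα heq A W hW c
          (Finset.mem_sdiff.1 hcmem).2
      have hL : (∑ c ∈ W' \ W,
          (α * lam 1 * ((Finset.univ.filter fun i => c ∈ A i).card : ℝ) * k)) =
          (k : ℝ) * (lam 1 * (α * S)) := by
        rw [hS]
        simp only [Finset.mul_sum]
        exact Finset.sum_congr rfl fun c _ => by ring
      have hR : (∑ _c ∈ W' \ W, lam 1 * approvalScore A W) ≤
          (k : ℝ) * (lam 1 * approvalScore A W) := by
        rw [Finset.sum_const, nsmul_eq_mul]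
        refine mul_le_mul_of_nonneg_right ?_ (by positivity)
        have hcard : (W' \ W).card ≤ k := by
          calc (W' \ W).card ≤ W'.card := Finset.card_le_card (Finset.sdiff_subset)
            _ = k := hW'
        exact_mod_cast hcard
      have hkpos : (0:ℝ) < (k:ℝ) := by exact_mod_cast hk
      have h5 : (k : ℝ) * (lam 1 * (α * S)) ≤ (k : ℝ) * (lam 1 * approvalScore A W) := by
        calc (k : ℝ) * (lam 1 * (α * S)) = _ := hL.symm
          _ ≤ _ := hsum
          _ ≤ _ := hR
      have h6 : lam 1 * (α * S) ≤ lam 1 * approvalScore A W :=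
        le_of_mul_le_mul_left (by exact h5) hkpos
      exact le_of_mul_le_mul_left (by exact h6) hlam1
    have h7 : α * approvalScore A W' ≤ α * approvalScore A W + α * S := by
      have := mul_le_mul_of_nonneg_left hva hα.le
      rw [mul_add] at this
      exact this
    rw [div_mul_eq_mul_div, div_le_iff₀ h1α]
    nlinarith
  · rw [lt_div_iff₀ h1α]
    nlinarith [pow_pos hα 3]
end

section
/- Let (N, C, A) be an approval-based election, k a committee size, and W a size-k committee that provides Extended Justified Representation (EJR) for (A, k). Then for every positive integer ℓ and every ℓ-large group of voters V ⊆ N with |∩_{i∈V} A(i)| ≥ ℓ, the average satisfaction satisfies sat_V(A,W) ≥ (ℓ−1)/2; consequently every committee rule satisfying EJR has proportionality guarantee g(ℓ,k) = (ℓ−1)/2. -/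
open Finset

/-- A size-`k` committee `W` provides Extended Justified Representation for `(A, k)`. -/
def EJR {C : Type*} [Fintype C] [DecidableEq C] {n : ℕ}
    (A : Fin n → Finset C) (k : ℕ) (W : Finset C) : Prop :=
  ∀ ℓ : ℕ, 0 < ℓ → ∀ V : Finset (Fin n), LargeGroup k ℓ V →
    ℓ ≤ (commonApproved A V).card → ∃ i ∈ V, ℓ ≤ (A i ∩ W).card

lemma gauss_real : ∀ m : ℕ, ∑ j ∈ Finset.range m, ((j:ℝ)+1) = m*(m+1)/2 := by
  intro m
  induction m with
  | zero => simp
  | succ p ih => rw [Finset.sum_range_succ, ih]; push_cast; ring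

theorem ejr_implies_average_satisfaction
    {C : Type*} [Fintype C] [DecidableEq C] {n : ℕ}
    (A : Fin n → Finset C) (k : ℕ) (hk : 0 < k)
    (W : Finset C) (hWcard : W.card = k) (hEJR : EJR A k W) :
    ∀ ℓ : ℕ, 0 < ℓ → ∀ V : Finset (Fin n), LargeGroup k ℓ V →
      ℓ ≤ (commonApproved A V).card →
      ((ℓ : ℝ) - 1) / 2 ≤ satisf A V W := by
  intro ℓ hℓ V hV hcom
  rcases V.eq_empty_or_nonempty with rfl | hVne
  · obtain ⟨i, hi, _⟩ := hEJR ℓ hℓ ∅ hV hcom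
    exact absurd hi (by simp)
  have hVpos : (0:ℝ) < V.card := by exact_mod_cast hVne.card_pos
  have hkpos : (0:ℝ) < k := by exact_mod_cast hk
  have hℓpos : (0:ℝ) < ℓ := by exact_mod_cast hℓ
  set s : Fin n → ℕ := fun i => (A i ∩ W).card with hs
  -- claim: for each j < ℓ, the group of voters with satisfaction ≤ j is small
  have claim : ∀ j < ℓ, ((V.filter (fun i => s i ≤ j)).card : ℝ) < ((j:ℝ)+1) * n / k := by
    intro j hj
    by_contra h
    push_neg at h
    have hlarge : LargeGroup k (j+1) (V.filter (fun i => s i ≤ j)) := by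
      unfold LargeGroup
      push_cast
      exact h
    have hsub : commonApproved A V ⊆ commonApproved A (V.filter (fun i => s i ≤ j)) := by
      intro c hc
      simp only [commonApproved, mem_filter, mem_univ, true_and] at hc ⊢
      exact fun i hi => hc i hi.1
    obtain ⟨i, hi, hsi⟩ := hEJR (j+1) (Nat.succ_pos j) _ hlarge
      (le_trans (le_trans (by omega) hcom) (card_le_card hsub))
    have := (mem_filter.mp hi).2
    simp only [hs] at this
    omega
  -- layered counting: sum of satisfactions bounds the layer counts
  have key : ∑ j ∈ Finset.range ℓ, ((V.filter (fun i => j < s i)).card) ≤ ∑ i ∈ V, s i := by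
    have h1 : ∀ j, ((V.filter (fun i => j < s i)).card) = ∑ i ∈ V, if j < s i then 1 else 0 := by
      intro j; rw [Finset.card_filter]
    calc ∑ j ∈ Finset.range ℓ, ((V.filter (fun i => j < s i)).card)
        = ∑ j ∈ Finset.range ℓ, ∑ i ∈ V, (if j < s i then 1 else 0) := by
          exact Finset.sum_congr rfl (fun j _ => h1 j)
      _ = ∑ i ∈ V, ∑ j ∈ Finset.range ℓ, (if j < s i then 1 else 0) := Finset.sum_comm
      _ ≤ ∑ i ∈ V, s i := by
          apply Finset.sum_le_sum
          intro i _
          rw [← Finset.card_filter]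
          calc ((Finset.range ℓ).filter (fun j => j < s i)).card
              ≤ (Finset.range (s i)).card := by
                apply card_le_card
                intro j hj
                simp only [mem_filter, mem_range] at hj ⊢
                exact hj.2
            _ = s i := card_range _
  -- complement counting
  have hcompl : ∀ j : ℕ, ((V.filter (fun i => j < s i)).card : ℝ)
      = (V.card : ℝ) - ((V.filter (fun i => s i ≤ j)).card : ℝ) := by
    intro j
    have := Finset.card_filter_add_card_filter_not (s := V) (p := fun i => s i ≤ j)
    have h2 : (V.filter (fun i => ¬ s i ≤ j)) = (V.filter (fun i => j < s i)) := by
      apply Finset.filter_congr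
      intro i _
      simp [not_le]
    rw [h2] at this
    have : (V.filter (fun i => s i ≤ j)).card + (V.filter (fun i => j < s i)).card = V.card := this
    push_cast [← this]
    ring
  have hnk : (n:ℝ)/k ≤ (V.card:ℝ)/ℓ := by
    rw [div_le_div_iff₀ hkpos hℓpos]
    have := hV
    unfold LargeGroup at this
    rw [div_le_iff₀ hkpos] at this
    nlinarith
  -- chain of real inequalities
  have sumbound : (V.card : ℝ) * (((ℓ:ℝ)-1)/2) ≤ ∑ i ∈ V, (s i : ℝ) := by
    have step1 : ∑ j ∈ Finset.range ℓ, ((V.filter (fun i => j < s i)).card : ℝ)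
        ≤ ∑ i ∈ V, (s i : ℝ) := by exact_mod_cast key
    have step2 : ∑ j ∈ Finset.range ℓ, ((V.card : ℝ) - ((j:ℝ)+1) * n / k)
        ≤ ∑ j ∈ Finset.range ℓ, ((V.filter (fun i => j < s i)).card : ℝ) := by
      apply Finset.sum_le_sum
      intro j hj
      rw [hcompl j]
      have := claim j (mem_range.mp hj)
      linarith
    have step3 : ∑ j ∈ Finset.range ℓ, ((V.card : ℝ) - ((j:ℝ)+1) * n / k)
        = (ℓ:ℝ) * V.card - ((ℓ:ℝ)*((ℓ:ℝ)+1)/2) * ((n:ℝ)/k) := by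
      rw [Finset.sum_sub_distrib, Finset.sum_const, Finset.card_range]
      have : ∑ j ∈ Finset.range ℓ, ((j:ℝ)+1) * n / k
          = (∑ j ∈ Finset.range ℓ, ((j:ℝ)+1)) * ((n:ℝ)/k) := by
        rw [Finset.sum_mul]
        apply Finset.sum_congr rfl
        intro j _
        ring
      rw [this, gauss_real]
      push_cast
      ring
    have step4 : (V.card : ℝ) * (((ℓ:ℝ)-1)/2)
        ≤ (ℓ:ℝ) * V.card - ((ℓ:ℝ)*((ℓ:ℝ)+1)/2) * ((n:ℝ)/k) := by
      have h5 : ((ℓ:ℝ)*((ℓ:ℝ)+1)/2) * ((n:ℝ)/k) ≤ ((ℓ:ℝ)*((ℓ:ℝ)+1)/2) * ((V.card:ℝ)/ℓ) := by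
        apply mul_le_mul_of_nonneg_left hnk
        positivity
      have h6 : ((ℓ:ℝ)*((ℓ:ℝ)+1)/2) * ((V.card:ℝ)/ℓ) = (V.card:ℝ) * (((ℓ:ℝ)+1)/2) := by
        field_simp
      rw [h6] at h5
      nlinarith
    linarith
  -- conclude
  unfold satisf
  rw [le_div_iff₀ hVpos]
  have heq : ∑ i ∈ V, ((W ∩ A i).card : ℝ) = ∑ i ∈ V, (s i : ℝ) := by
    apply Finset.sum_congr rfl
    intro i _
    rw [Finset.inter_comm]
  rw [heq]
  linarith
end

section
/- Consider Phragmén's Sequential Rule scaled so that each selected candidate carries n units of load instead of one. In every run of the rule, for every step j the following holds: the candidate c selected at step j minimizes the quantity (n + Σ_{i∈N(c′)} ℓ_i(j−1)) / |N(c′)| over all not-yet-selected candidates c′; the resulting maximum load satisfies max_{i∈N} ℓ_i(j) = (n + Σ_{i∈N(c)} ℓ_i(j−1)) / |N(c)|; and the loads update as ℓ_i(j) = max_{i'∈N} ℓ_{i'}(j) for every i ∈ N(c) and ℓ_i(j) = ℓ_i(j−1) for every i ∉ N(c). Consequently, Phragmén's Sequential Rule is equivalent to the money-based procedure in which each voter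 earns credits at unit speed, a candidate is bought for n credits by its approvers as soon as they jointly hold n credits, and the buyers' credits are reset to zero: after each step j, the remaining credits of voter i equal max_{i'∈N} ℓ_{i'}(j) − ℓ_i(j). -/
/-!
Let `price ℓ c = (n + ∑_{i ∈ N(c)} ℓ i) / |N(c)|`, the common level the approvers of `c` reach if
they share `c`'s `n` units so as to end up with equal loads. Any admissible distribution for `c`
leaves the approvers of `c` with average load `price ℓ c`, so its maximum load is at least that
much; and as long as no load exceeds `price ℓ c`, the equalizing distribution attains it. The
invariant "every load is at most the price of every unselected candidate" holds initially and is
preserved, because the new maximum load is the minimal price and loads only grow. Hence at each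
step the optimal maximum load is the minimal price, and it is attained exactly when the approvers
of the chosen candidate are all lifted to it, which is the money-based description.
-/

open Finset

def ValidLoadDistN {C : Type*} {n : ℕ} (A : Fin n → Finset C) (c : C)
    (δ : Fin n → ℝ) : Prop :=
  (∀ i, 0 ≤ δ i) ∧ (∑ i, δ i = (n : ℝ)) ∧ (∀ i, c ∉ A i → δ i = 0)

/-- The set of voters approving candidate `c`. -/
def approvers {C : Type*} [DecidableEq C] {n : ℕ} (A : Fin n → Finset C) (c : C) : Finset (Fin n) :=
  Finset.univ.filter (fun i => c ∈ A i)

section LoadDistribution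

variable {C : Type*} [DecidableEq C] {n : ℕ} {A : Fin n → Finset C} {c : C} {ℓ δ : Fin n → ℝ}

theorem mem_approvers {i : Fin n} : i ∈ approvers A c ↔ c ∈ A i := by
  simp [approvers]

noncomputable def price (A : Fin n → Finset C) (ℓ : Fin n → ℝ) (c : C) : ℝ :=
  ((n : ℝ) + ∑ i ∈ approvers A c, ℓ i) / ((approvers A c).card : ℝ)

theorem card_mul_price (hne : (approvers A c).Nonempty) :
    (approvers A c).card * price A ℓ c = n + ∑ i ∈ approvers A c, ℓ i :=
  mul_div_cancel₀ _ (by exact_mod_cast hne.card_pos.ne')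

theorem price_mono : Monotone fun ℓ => price A ℓ c := fun _ _ h => by
  simp only [price]
  gcongr with i
  exact h i

theorem ValidLoadDistN.sum_approvers (hδ : ValidLoadDistN A c δ) :
    ∑ i ∈ approvers A c, δ i = n := by
  rw [← hδ.2.1]
  exact sum_subset (subset_univ _) fun i _ hi => hδ.2.2 i (mt mem_approvers.2 hi)

theorem ValidLoadDistN.approvers_nonempty (hδ : ValidLoadDistN A c δ) (hn : 0 < n) :
    (approvers A c).Nonempty :=
  nonempty_of_sum_ne_zero (by rw [hδ.sum_approvers]; positivity)

theorem ValidLoadDistN.sum_approvers_add_eq_sum_price (hδ : ValidLoadDistN A c δ) (hn : 0 < n) :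
    ∑ i ∈ approvers A c, (ℓ i + δ i) = ∑ _i ∈ approvers A c, price A ℓ c := by
  rw [sum_const, nsmul_eq_mul, card_mul_price (hδ.approvers_nonempty hn), sum_add_distrib,
    hδ.sum_approvers, add_comm]

theorem ValidLoadDistN.price_le_iSup_add (hδ : ValidLoadDistN A c δ) (hn : 0 < n) :
    price A ℓ c ≤ ⨆ i, ℓ i + δ i := by
  obtain ⟨i, -, hi⟩ := exists_le_of_sum_le (hδ.approvers_nonempty hn)
    (hδ.sum_approvers_add_eq_sum_price (ℓ := ℓ) hn).ge
  exact hi.trans (le_ciSup (Finite.bddAbove_range fun i => ℓ i + δ i) i)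

theorem ValidLoadDistN.add_eq_price (hδ : ValidLoadDistN A c δ) (hn : 0 < n)
    (hle : ∀ i, ℓ i + δ i ≤ price A ℓ c) :
    ∀ i ∈ approvers A c, ℓ i + δ i = price A ℓ c :=
  (sum_eq_sum_iff_of_le fun i _ => hle i).1 (hδ.sum_approvers_add_eq_sum_price hn)

theorem exists_validLoadDistN_add_le_price (hne : (approvers A c).Nonempty)
    (hℓ : ∀ i, ℓ i ≤ price A ℓ c) :
    ∃ δ, ValidLoadDistN A c δ ∧ ∀ i, ℓ i + δ i ≤ price A ℓ c := by
  refine ⟨fun i => if c ∈ A i then price A ℓ c - ℓ i else 0,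
    ⟨fun i => ?_, ?_, fun i hi => if_neg hi⟩, fun i => ?_⟩
  · dsimp only
    split_ifs <;> linarith [hℓ i]
  · rw [← sum_filter]
    change ∑ i ∈ approvers A c, (price A ℓ c - ℓ i) = n
    rw [sum_sub_distrib, sum_const, nsmul_eq_mul, card_mul_price hne]
    ring
  · dsimp only
    split_ifs <;> linarith [hℓ i]

theorem iSup_add_le_price_of_optimal
    (hopt : ∀ δ', ValidLoadDistN A c δ' → (⨆ i, ℓ i + δ i) ≤ ⨆ i, ℓ i + δ' i)
    (hne : (approvers A c).Nonempty) (hℓ : ∀ i, ℓ i ≤ price A ℓ c) :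
    (⨆ i, ℓ i + δ i) ≤ price A ℓ c := by
  obtain ⟨δ', hδ', hle⟩ := exists_validLoadDistN_add_le_price hne hℓ
  obtain ⟨i, -⟩ := hne
  have : Nonempty (Fin n) := ⟨i⟩
  exact (hopt δ' hδ').trans (ciSup_le hle)

end LoadDistribution

section PhragmenRun

variable {C : Type*} {n k : ℕ} {A : Fin n → Finset C} {cand : Fin k → C}
  {load : ℕ → Fin n → ℝ} {δ : Fin k → Fin n → ℝ} {c : C}

def Unselected (cand : Fin k → C) (m : ℕ) (c : C) : Prop :=
  ∀ j : Fin k, (j : ℕ) < m → cand j ≠ c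

/-- Steps are numbered from `0`: step `j` selects `cand j`, distributes its `n` units as `δ j`,
and turns `load j` into `load (j + 1)`. -/
structure IsPhragmenRun (A : Fin n → Finset C) (cand : Fin k → C) (load : ℕ → Fin n → ℝ)
    (δ : Fin k → Fin n → ℝ) : Prop where
  injective : Function.Injective cand
  load_zero : ∀ i, load 0 i = 0
  valid : ∀ j, ValidLoadDistN A (cand j) (δ j)
  load_succ : ∀ (j : Fin k) i, load ((j : ℕ) + 1) i = load j i + δ j i
  optimal : ∀ (j : Fin k) c', Unselected cand j c' → ∀ δ', ValidLoadDistN A c' δ' →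
    (⨆ i, load j i + δ j i) ≤ ⨆ i, load j i + δ' i

namespace IsPhragmenRun

theorem unselected_self (hrun : IsPhragmenRun A cand load δ) (j : Fin k) :
    Unselected cand j (cand j) :=
  fun _ hj' h => hj'.ne (congrArg Fin.val (hrun.injective h))

theorem load_le_load_succ (hrun : IsPhragmenRun A cand load δ) (j : Fin k) :
    load j ≤ load ((j : ℕ) + 1) := fun i => by
  rw [hrun.load_succ]
  linarith [(hrun.valid j).1 i]

theorem iSup_load_succ (hrun : IsPhragmenRun A cand load δ) (j : Fin k) :
    (⨆ i, load ((j : ℕ) + 1) i) = ⨆ i, load j i + δ j i := by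
  simp_rw [hrun.load_succ]

theorem load_succ_of_notMem (hrun : IsPhragmenRun A cand load δ) (j : Fin k) {i : Fin n}
    (hi : cand j ∉ A i) : load ((j : ℕ) + 1) i = load j i := by
  rw [hrun.load_succ, (hrun.valid j).2.2 i hi, add_zero]

variable [DecidableEq C]

theorem load_le_price (hrun : IsPhragmenRun A cand load δ) :
    ∀ m ≤ k, ∀ c, Unselected cand m c → (approvers A c).Nonempty →
      ∀ i, load m i ≤ price A (load m) c
  | 0, _, c, _, _, i => by
    rw [show load 0 = 0 from funext hrun.load_zero]
    simp only [price, Pi.zero_apply, sum_const_zero, add_zero]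
    positivity
  | m + 1, hm, c, hc, hne, i => by
    let j : Fin k := ⟨m, hm⟩
    have hcm : Unselected cand m c := fun j' hj' => hc j' (Nat.lt_succ_of_lt hj')
    calc load (m + 1) i ≤ ⨆ i, load (m + 1) i := le_ciSup (Finite.bddAbove_range _) i
      _ = ⨆ i, load m i + δ j i := hrun.iSup_load_succ j
      _ ≤ price A (load m) c := iSup_add_le_price_of_optimal (hrun.optimal j c hcm) hne
            (hrun.load_le_price m (Nat.le_of_succ_le hm) c hcm hne)
      _ ≤ price A (load (m + 1)) c := price_mono (hrun.load_le_load_succ j)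

theorem iSup_load_succ_le_price (hrun : IsPhragmenRun A cand load δ) (j : Fin k)
    (hc : Unselected cand j c) (hne : (approvers A c).Nonempty) :
    (⨆ i, load ((j : ℕ) + 1) i) ≤ price A (load j) c :=
  hrun.iSup_load_succ j ▸ iSup_add_le_price_of_optimal (hrun.optimal j c hc) hne
    (hrun.load_le_price j j.is_lt.le c hc hne)

theorem iSup_load_succ_eq_price (hrun : IsPhragmenRun A cand load δ) (hn : 0 < n) (j : Fin k) :
    (⨆ i, load ((j : ℕ) + 1) i) = price A (load j) (cand j) :=
  le_antisymm
    (hrun.iSup_load_succ_le_price j (hrun.unselected_self j) ((hrun.valid j).approvers_nonempty hn))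
    (hrun.iSup_load_succ j ▸ (hrun.valid j).price_le_iSup_add hn)

theorem load_succ_eq_iSup (hrun : IsPhragmenRun A cand load δ) (hn : 0 < n) (j : Fin k)
    {i : Fin n} (hi : cand j ∈ A i) :
    load ((j : ℕ) + 1) i = ⨆ i', load ((j : ℕ) + 1) i' := by
  have hle : ∀ i', load j i' + δ j i' ≤ price A (load j) (cand j) := fun i' => by
    rw [← hrun.load_succ, ← hrun.iSup_load_succ_eq_price hn]
    exact le_ciSup (Finite.bddAbove_range _) i'
  rw [hrun.iSup_load_succ_eq_price hn, hrun.load_succ]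
  exact (hrun.valid j).add_eq_price hn hle i (mem_approvers.2 hi)

end IsPhragmenRun

end PhragmenRun

theorem phragmen_money_based_equivalence_general
    {C : Type*} [DecidableEq C] {n : ℕ} (hn : 0 < n)
    (A : Fin n → Finset C) (k : ℕ)
    (cand : Fin k → C) (load : ℕ → Fin n → ℝ) (δ : Fin k → Fin n → ℝ)
    (hinj : Function.Injective cand)
    (h0 : ∀ i, load 0 i = 0)
    (hvalid : ∀ j : Fin k, ValidLoadDistN A (cand j) (δ j))
    (hupd : ∀ (j : Fin k) (i : Fin n), load ((j : ℕ) + 1) i = load (j : ℕ) i + δ j i)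
    (hopt : ∀ j : Fin k, ∀ c' : C, (∀ j' : Fin k, j' < j → cand j' ≠ c') →
      ∀ δ' : Fin n → ℝ, ValidLoadDistN A c' δ' →
        (⨆ i, load (j : ℕ) i + δ j i) ≤ (⨆ i, load (j : ℕ) i + δ' i)) :
    ∀ j : Fin k,
      (∀ c' : C, (∀ j' : Fin k, j' < j → cand j' ≠ c') → (approvers A c').Nonempty →
        ((n : ℝ) + ∑ i ∈ approvers A (cand j), load (j : ℕ) i) /
            ((approvers A (cand j)).card : ℝ) ≤
          ((n : ℝ) + ∑ i ∈ approvers A c', load (j : ℕ) i) / ((approvers A c').card : ℝ)) ∧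
      ((⨆ i, load ((j : ℕ) + 1) i) =
        ((n : ℝ) + ∑ i ∈ approvers A (cand j), load (j : ℕ) i) /
          ((approvers A (cand j)).card : ℝ)) ∧
      (∀ i : Fin n,
        (cand j ∈ A i → load ((j : ℕ) + 1) i = ⨆ i' : Fin n, load ((j : ℕ) + 1) i') ∧
        (cand j ∉ A i → load ((j : ℕ) + 1) i = load (j : ℕ) i)) ∧
      (∑ i ∈ approvers A (cand j),
        ((⨆ i' : Fin n, load ((j : ℕ) + 1) i') - load (j : ℕ) i) = (n : ℝ)) := by
  have hrun : IsPhragmenRun A cand load δ := ⟨hinj, h0, hvalid, hupd, hopt⟩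
  intro j
  have hsup := hrun.iSup_load_succ_eq_price hn j
  refine ⟨fun c' hc' hne' => hsup.symm.trans_le (hrun.iSup_load_succ_le_price j hc' hne'), hsup,
    fun i => ⟨hrun.load_succ_eq_iSup hn j, hrun.load_succ_of_notMem j⟩, ?_⟩
  rw [hsup, sum_sub_distrib, sum_const, nsmul_eq_mul,
    card_mul_price ((hrun.valid j).approvers_nonempty hn)]
  ring

theorem phragmen_money_based_equivalence
    {C : Type*} [Fintype C] [DecidableEq C] {n : ℕ} (hn : 0 < n)
    (A : Fin n → Finset C) (k : ℕ)
    (cand : Fin k → C) (load : ℕ → Fin n → ℝ) (δ : Fin k → Fin n → ℝ)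
    (hinj : Function.Injective cand)
    (h0 : ∀ i, load 0 i = 0)
    (hvalid : ∀ j : Fin k, ValidLoadDistN A (cand j) (δ j))
    (hupd : ∀ (j : Fin k) (i : Fin n), load ((j : ℕ) + 1) i = load (j : ℕ) i + δ j i)
    (hopt : ∀ j : Fin k, ∀ c' : C, (∀ j' : Fin k, j' < j → cand j' ≠ c') →
      ∀ δ' : Fin n → ℝ, ValidLoadDistN A c' δ' →
        (⨆ i, load (j : ℕ) i + δ j i) ≤ (⨆ i, load (j : ℕ) i + δ' i)) :
    ∀ j : Fin k,
      (∀ c' : C, (∀ j' : Fin k, j' < j → cand j' ≠ c') → (approvers A c').Nonempty →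
        ((n : ℝ) + ∑ i ∈ approvers A (cand j), load (j : ℕ) i) /
            ((approvers A (cand j)).card : ℝ) ≤
          ((n : ℝ) + ∑ i ∈ approvers A c', load (j : ℕ) i) / ((approvers A c').card : ℝ)) ∧
      ((⨆ i, load ((j : ℕ) + 1) i) =
        ((n : ℝ) + ∑ i ∈ approvers A (cand j), load (j : ℕ) i) /
          ((approvers A (cand j)).card : ℝ)) ∧
      (∀ i : Fin n,
        (cand j ∈ A i → load ((j : ℕ) + 1) i = ⨆ i' : Fin n, load ((j : ℕ) + 1) i') ∧
        (cand j ∉ A i → load ((j : ℕ) + 1) i = load (j : ℕ) i)) ∧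
      (∑ i ∈ approvers A (cand j),
        ((⨆ i' : Fin n, load ((j : ℕ) + 1) i') - load (j : ℕ) i) = (n : ℝ)) :=
  phragmen_money_based_equivalence_general hn A k cand load δ hinj h0 hvalid hupd hopt
end

section
/- For every committee size k, every approval-based election (N, C, A), and every size-k committee W winning under PAV, the approval score of W is at least (α/(1+α)) times the maximum approval score of any size-k committee, where α = (√(4k+1) − 1)/(2k) is the unique positive solution of α·(1 + k·α) = 1. In particular, the utilitarian efficiency of PAV is Θ(1/√k). -/
open Finset

/-- PAV: winning committees are the size-`k` committees of maximal PAV score. -/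
def PAVWins {C : Type*} [DecidableEq C] {n : ℕ}
    (A : Fin n → Finset C) (k : ℕ) (W : Finset C) : Prop :=
  W.card = k ∧ ∀ W' : Finset C, W'.card = k → pavScore A W' ≤ pavScore A W

section Aux

variable {C : Type*} [DecidableEq C] {n : ℕ} (A : Fin n → Finset C)

lemma pav_insert (c : C) (V : Finset C) (hc : c ∉ V) :
    pavScore A (insert c V) =
      pavScore A V + ∑ i, (if c ∈ A i then (1:ℝ) / ((A i ∩ V).card + 1) else 0) := by
  unfold pavScore
  rw [← Finset.sum_add_distrib]
  refine Finset.sum_congr rfl fun i _ => ?_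
  by_cases h : c ∈ A i
  · have he : A i ∩ insert c V = insert c (A i ∩ V) := by
      ext x; by_cases hx : x = c <;> simp [hx, h]
    have hcm : c ∉ A i ∩ V := by simp [hc]
    rw [he, card_insert_of_notMem hcm, Finset.sum_range_succ, if_pos h]
  · have he : A i ∩ insert c V = A i ∩ V := by
      ext x; by_cases hx : x = c <;> simp [hx, h]
    rw [he, if_neg h, add_zero]

lemma pav_erase (c : C) (V : Finset C) (hc : c ∈ V) :
    pavScore A V =
      pavScore A (V.erase c) + ∑ i, (if c ∈ A i then (1:ℝ) / ((A i ∩ V).card) else 0) := by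
  have h2 : c ∉ V.erase c := notMem_erase c V
  have h := pav_insert A c (V.erase c) h2
  rw [insert_erase hc] at h
  rw [h]
  congr 1
  refine Finset.sum_congr rfl fun i _ => ?_
  by_cases hca : c ∈ A i
  · rw [if_pos hca, if_pos hca]
    have he : A i ∩ V.erase c = (A i ∩ V).erase c := by
      ext x; simp only [mem_inter, mem_erase]; tauto
    have hcm : c ∈ A i ∩ V := mem_inter.2 ⟨hca, hc⟩
    rw [he, card_erase_of_mem hcm]
    have h1 : 1 ≤ (A i ∩ V).card := card_pos.2 ⟨c, hcm⟩
    congr 1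
    rw [Nat.cast_sub h1]
    push_cast
    ring
  · rw [if_neg hca, if_neg hca]

lemma swap_ineq {k : ℕ} {W : Finset C} (hW : PAVWins A k W)
    {c : C} (hcW : c ∉ W) {c' : C} (hc' : c' ∈ W) :
    ∑ i, (if c ∈ A i then (1:ℝ)/((A i ∩ W).card + 1) else 0)
      ≤ ∑ i, (if c' ∈ A i then (1:ℝ)/((A i ∩ W).card) else 0) := by
  have hc'V : c' ∈ insert c W := mem_insert_of_mem hc'
  have hcard : ((insert c W).erase c').card = k := by
    rw [card_erase_of_mem hc'V, card_insert_of_notMem hcW, hW.1]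
    omega
  have hle := hW.2 _ hcard
  have e1 := pav_insert A c W hcW
  have e2 := pav_erase A c' (insert c W) hc'V
  -- pavScore (insert c W) = pavScore W + G = pavScore (erase..) + L
  have key : pavScore A W + ∑ i, (if c ∈ A i then (1:ℝ)/((A i ∩ W).card + 1) else 0)
      ≤ pavScore A W + ∑ i, (if c' ∈ A i then (1:ℝ)/((A i ∩ insert c W).card) else 0) := by
    calc pavScore A W + ∑ i, (if c ∈ A i then (1:ℝ)/((A i ∩ W).card + 1) else 0)
        = pavScore A (insert c W) := e1.symm
      _ = pavScore A ((insert c W).erase c')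
            + ∑ i, (if c' ∈ A i then (1:ℝ)/((A i ∩ insert c W).card) else 0) := e2
      _ ≤ _ := by gcongr
  have key2 := le_of_add_le_add_left key
  refine key2.trans (Finset.sum_le_sum fun i _ => ?_)
  by_cases hca : c' ∈ A i
  · rw [if_pos hca, if_pos hca]
    have hcm : c' ∈ A i ∩ W := mem_inter.2 ⟨hca, hc'⟩
    have h1 : 0 < (A i ∩ W).card := card_pos.2 ⟨c', hcm⟩
    have h2 : (A i ∩ W).card ≤ (A i ∩ insert c W).card := by
      apply card_le_card; intro x hx
      rcases mem_inter.1 hx with ⟨ha, hw⟩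
      exact mem_inter.2 ⟨ha, mem_insert_of_mem hw⟩
    apply one_div_le_one_div_of_le
    · exact_mod_cast h1
    · exact_mod_cast h2
  · rw [if_neg hca, if_neg hca]

lemma per_cand {k : ℕ} (hk : 0 < k) {W : Finset C} (hW : PAVWins A k W)
    {c : C} (hcW : c ∉ W) :
    (k:ℝ) * ∑ i, (if c ∈ A i then (1:ℝ)/((A i ∩ W).card + 1) else 0)
      ≤ approvalScore A W := by
  have h1 : (k:ℝ) * ∑ i, (if c ∈ A i then (1:ℝ)/((A i ∩ W).card + 1) else 0)
      = ∑ _c' ∈ W, ∑ i, (if c ∈ A i then (1:ℝ)/((A i ∩ W).card + 1) else 0) := by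
    rw [Finset.sum_const, hW.1, nsmul_eq_mul]
  rw [h1]
  have h2 : ∀ c' ∈ W, ∑ i, (if c ∈ A i then (1:ℝ)/((A i ∩ W).card + 1) else 0)
      ≤ ∑ i, (if c' ∈ A i then (1:ℝ)/((A i ∩ W).card) else 0) :=
    fun c' hc' => swap_ineq A hW hcW hc'
  calc ∑ _c' ∈ W, ∑ i, (if c ∈ A i then (1:ℝ)/((A i ∩ W).card + 1) else 0)
      ≤ ∑ c' ∈ W, ∑ i, (if c' ∈ A i then (1:ℝ)/((A i ∩ W).card) else 0) :=
        Finset.sum_le_sum h2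
    _ = ∑ i, ∑ c' ∈ W, (if c' ∈ A i then (1:ℝ)/((A i ∩ W).card) else 0) :=
        Finset.sum_comm
    _ ≤ ∑ i, ((A i ∩ W).card : ℝ) := by
        refine Finset.sum_le_sum fun i _ => ?_
        have : ∑ c' ∈ W, (if c' ∈ A i then (1:ℝ)/((A i ∩ W).card) else 0)
            = ((A i ∩ W).card : ℝ) * ((1:ℝ)/((A i ∩ W).card)) := by
          rw [Finset.sum_ite_mem, Finset.sum_const, nsmul_eq_mul]
          congr 2
          rw [inter_comm]
        rw [this]
        rcases Nat.eq_zero_or_pos (A i ∩ W).card with h0 | h0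
        · simp [h0]
        · have hne : ((A i ∩ W).card : ℝ) ≠ 0 := Nat.cast_ne_zero.2 h0.ne'
          rw [mul_one_div, div_self hne]
          exact_mod_cast h0
    _ = approvalScore A W := rfl

lemma step5_lemma (B S q k : ℝ) (hS0 : 0 ≤ S) (hq1 : 1 < q)
    (hq2 : q ^ 2 = 4 * k + 1)
    (hkey : B ^ 2 ≤ S * (k * S + B)) : B ≤ (1 + q) / 2 * S := by
  by_contra hcon
  push_neg at hcon
  have hx : 0 < 2 * B - (1 + q) * S := by linarith
  have hprod : (2 * B - (1 + q) * S) * (2 * B + (q - 1) * S) ≤ 0 := by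
    have h4 : (q ^ 2 - 4 * k - 1) * S ^ 2 = 0 := by rw [hq2]; ring
    nlinarith [hkey, h4]
  have h2 : 0 < 2 * B + (q - 1) * S := by
    have : 0 ≤ (q - 1) * S := mul_nonneg (by linarith) hS0
    linarith
  nlinarith [mul_pos hx h2]

lemma ratio_lemma (q k : ℝ) (hk' : 0 < k) (hq1 : 1 < q) (hq2 : q ^ 2 = 4 * k + 1) :
    ((q - 1) / (2 * k)) / (1 + (q - 1) / (2 * k)) = 2 / (q + 3) := by
  have h1 : (2:ℝ) * k ≠ 0 := by positivity
  have h2 : q + 3 ≠ 0 := by linarith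
  have h3 : (2:ℝ) * k + (q - 1) ≠ 0 := by nlinarith
  field_simp
  ring_nf
  nlinarith [hq2]

lemma alpha_eq_lemma (q k : ℝ) (hk' : 0 < k) (hq1 : 1 < q) (hq2 : q ^ 2 = 4 * k + 1) :
    ((q - 1) / (2 * k)) * (1 + k * ((q - 1) / (2 * k))) = 1 := by
  field_simp
  ring_nf
  nlinarith [hq2]

end Aux
theorem pav_utilitarian_efficiency
    (k : ℕ) (hk : 0 < k)
    {C : Type*} [Fintype C] [DecidableEq C] {n : ℕ} (A : Fin n → Finset C)
    (W : Finset C) (hW : PAVWins A k W) :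
    (0 < (Real.sqrt (4 * (k : ℝ) + 1) - 1) / (2 * (k : ℝ)) ∧
      ((Real.sqrt (4 * (k : ℝ) + 1) - 1) / (2 * (k : ℝ))) *
        (1 + (k : ℝ) * ((Real.sqrt (4 * (k : ℝ) + 1) - 1) / (2 * (k : ℝ)))) = 1 ∧
      ∀ β : ℝ, 0 < β → β * (1 + (k : ℝ) * β) = 1 →
        β = (Real.sqrt (4 * (k : ℝ) + 1) - 1) / (2 * (k : ℝ))) ∧
    ∀ W' : Finset C, W'.card = k →
      (((Real.sqrt (4 * (k : ℝ) + 1) - 1) / (2 * (k : ℝ))) /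
          (1 + (Real.sqrt (4 * (k : ℝ) + 1) - 1) / (2 * (k : ℝ)))) *
        approvalScore A W' ≤ approvalScore A W := by
  have hk' : (0:ℝ) < (k:ℝ) := by exact_mod_cast hk
  set q : ℝ := Real.sqrt (4 * (k : ℝ) + 1) with hqdef
  have hq2 : q ^ 2 = 4 * (k:ℝ) + 1 := Real.sq_sqrt (by positivity)
  have hq0 : 0 ≤ q := Real.sqrt_nonneg _
  have hq1 : 1 < q := by nlinarith
  set α : ℝ := (q - 1) / (2 * (k:ℝ)) with hαdef
  have hα0 : 0 < α := div_pos (by linarith) (by positivity)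
  have hαeq : α * (1 + (k:ℝ) * α) = 1 := by
    rw [hαdef]; exact alpha_eq_lemma q k hk' hq1 hq2
  refine ⟨⟨hα0, hαeq, ?_⟩, ?_⟩
  · intro β hβ0 hβeq
    have hfac : (β - α) * ((k:ℝ) * (β + α) + 1) = 0 := by
      linear_combination hβeq - hαeq
    have hpos : (0:ℝ) < (k:ℝ) * (β + α) + 1 := by positivity
    rcases mul_eq_zero.1 hfac with h | h
    · linarith
    · linarith
  · intro W' hW'
    set u : Fin n → ℝ := fun i => ((A i ∩ W).card : ℝ) with hu
    set b : Fin n → ℝ := fun i => ((A i ∩ (W' \ W)).card : ℝ) with hb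
    set S : ℝ := approvalScore A W with hS
    set S' : ℝ := approvalScore A W' with hS'
    set B : ℝ := ∑ i, b i with hB
    set T : ℝ := ∑ i, b i * (1 / (u i + 1)) with hT
    have hu0 : ∀ i, 0 ≤ u i := fun i => by positivity
    have hb0 : ∀ i, 0 ≤ b i := fun i => by positivity
    have hS0 : 0 ≤ S := Finset.sum_nonneg fun i _ => by positivity
    have hB0 : 0 ≤ B := Finset.sum_nonneg fun i _ => hb0 i
    have hbk : ∀ i, b i ≤ (k:ℝ) := by
      intro i
      have h1 : (A i ∩ (W' \ W)).card ≤ W'.card := by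
        apply card_le_card; intro x hx
        exact (mem_sdiff.1 (mem_inter.1 hx).2).1
      have h2 : (A i ∩ (W' \ W)).card ≤ k := hW' ▸ h1
      show ((A i ∩ (W' \ W)).card : ℝ) ≤ (k:ℝ)
      exact_mod_cast h2
    -- Step 1: S' ≤ S + B
    have step1 : S' ≤ S + B := by
      rw [hS', hS, hB, approvalScore, approvalScore, ← Finset.sum_add_distrib]
      refine Finset.sum_le_sum fun i _ => ?_
      have hsub : A i ∩ W' ⊆ (A i ∩ W) ∪ (A i ∩ (W' \ W)) := by
        intro x hx
        rcases mem_inter.1 hx with ⟨h1, h2⟩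
        by_cases h3 : x ∈ W
        · exact mem_union_left _ (mem_inter.2 ⟨h1, h3⟩)
        · exact mem_union_right _ (mem_inter.2 ⟨h1, mem_sdiff.2 ⟨h2, h3⟩⟩)
      have := (card_le_card hsub).trans (card_union_le _ _)
      show ((A i ∩ W').card : ℝ) ≤ ((A i ∩ W).card : ℝ) + ((A i ∩ (W' \ W)).card : ℝ)
      exact_mod_cast this
    -- Step 2: T ≤ S
    have step2 : T ≤ S := by
      have hTrw : ∑ c ∈ W' \ W, ∑ i, (if c ∈ A i then (1:ℝ)/(u i + 1) else 0) = T := by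
        rw [Finset.sum_comm]
        refine Finset.sum_congr rfl fun i _ => ?_
        rw [Finset.sum_ite_mem, Finset.sum_const, nsmul_eq_mul]
        have hc : ((W' \ W) ∩ A i).card = (A i ∩ (W' \ W)).card := by rw [inter_comm]
        rw [hc]
      rw [← hTrw]
      have hbound : ∀ c ∈ W' \ W, ∑ i, (if c ∈ A i then (1:ℝ)/(u i + 1) else 0) ≤ S / k := by
        intro c hc
        have hcW : c ∉ W := (mem_sdiff.1 hc).2
        have := per_cand A hk hW hcW
        rw [le_div_iff₀ hk', mul_comm]
        exact this
      calc ∑ c ∈ W' \ W, ∑ i, (if c ∈ A i then (1:ℝ)/(u i + 1) else 0)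
          ≤ ∑ _c ∈ W' \ W, S / k := Finset.sum_le_sum hbound
        _ = ((W' \ W).card : ℝ) * (S / k) := by rw [Finset.sum_const, nsmul_eq_mul]
        _ ≤ (k:ℝ) * (S / k) := by
            apply mul_le_mul_of_nonneg_right _ (by positivity)
            have : (W' \ W).card ≤ W'.card := card_le_card (sdiff_subset)
            rw [← hW']
            exact_mod_cast this
        _ = S := by field_simp
    -- Step 3: Cauchy-Schwarz
    have step3 : B ^ 2 ≤ T * ∑ i, b i * (u i + 1) := by
      rw [hB, hT]
      apply Finset.sum_sq_le_sum_mul_sum_of_sq_eq_mul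
      · intro i _; positivity
      · intro i _
        have := hu0 i; have := hb0 i; positivity
      · intro i _
        have h1 : u i + 1 ≠ 0 := by have := hu0 i; positivity
        field_simp
    -- Step 4
    have hSsum : S = ∑ i, u i := rfl
    have step4 : ∑ i, b i * (u i + 1) ≤ (k:ℝ) * S + B := by
      rw [hSsum, hB, Finset.mul_sum, ← Finset.sum_add_distrib]
      refine Finset.sum_le_sum fun i _ => ?_
      have h1 : b i * u i ≤ (k:ℝ) * u i :=
        mul_le_mul_of_nonneg_right (hbk i) (hu0 i)
      nlinarith [hbk i, hu0 i, hb0 i]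
    have hkey : B ^ 2 ≤ S * ((k:ℝ) * S + B) := by
      have h1 : T * (∑ i, b i * (u i + 1)) ≤ S * ((k:ℝ) * S + B) := by
        apply mul_le_mul step2 step4 _ hS0
        exact Finset.sum_nonneg fun i _ => by
          have := hu0 i; have := hb0 i; positivity
      exact step3.trans h1
    clear_value u b S S' B T q α
    -- Step 5: B ≤ (1+q)/2 * S
    have step5 : B ≤ (1 + q) / 2 * S :=
      step5_lemma B S q (k:ℝ) hS0 hq1 hq2 hkey
    -- conclude
    have hratio : α / (1 + α) = 2 / (q + 3) := by
      rw [hαdef]; exact ratio_lemma q (k:ℝ) hk' hq1 hq2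
    rw [hratio, div_mul_eq_mul_div, div_le_iff₀ (by linarith : (0:ℝ) < q + 3)]
    linarith [step1, step5]
end
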